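/- arXiv:1911.04281 — 9 statements merged into one kernel-verified Lean document; each statement's English description precedes it below -/
import Mathlib

section
/- In a ℂ-linear abelian category in which all objects have finite length and Hom-spaces are finite-dimensional, every short exact sequence 0 → A → E → B → 0 with E ≅ A ⊕ B splits. -/
/-!
Postcomposition with `g : E ⟶ B` gives a left exact sequence of finite-dimensional spaces
`0 → Hom(B, A) → Hom(B, E) → Hom(B, B)`. Since `E ≅ A ⊕ B`, the dimension of the middle term is
the sum of the outer ones, so `Hom(B, E) → Hom(B, B)` is onto and some `s` maps to `𝟙 B`.
-/

open CategoryTheory CategoryTheory.Limits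

namespace CategoryTheory

variable {R : Type*} [Semiring R] {C : Type*} [Category C]

noncomputable def biprodHomLinearEquiv [Preadditive C] [Linear R C] [HasBinaryBiproducts C]
    (W X Y : C) : (W ⟶ X ⊞ Y) ≃ₗ[R] (W ⟶ X) × (W ⟶ Y) where
  toFun s := (s ≫ biprod.fst, s ≫ biprod.snd)
  map_add' s t := by simp [Preadditive.add_comp]
  map_smul' r s := by simp [Linear.smul_comp]
  invFun p := biprod.lift p.1 p.2
  left_inv s := by apply biprod.hom_ext <;> simp
  right_inv p := by simp

variable {K : Type*} [Field K]

theorem finrank_hom_biprod [Preadditive C] [Linear K C] [HasBinaryBiproducts C] (W X Y : C)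
    [FiniteDimensional K (W ⟶ X)] [FiniteDimensional K (W ⟶ Y)] :
    Module.finrank K (W ⟶ X ⊞ Y) = Module.finrank K (W ⟶ X) + Module.finrank K (W ⟶ Y) := by
  rw [(biprodHomLinearEquiv W X Y).finrank_eq, Module.finrank_prod]

namespace ShortComplex

variable [Abelian C] [Linear K C] {S : ShortComplex C}

theorem Exact.ker_rightComp_g (hS : S.Exact) [Mono S.f] (W : C) :
    LinearMap.ker (Linear.rightComp K W S.g) = LinearMap.range (Linear.rightComp K W S.f) := by
  ext s
  simp only [LinearMap.mem_ker, LinearMap.mem_range, Linear.rightComp_apply]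
  constructor
  · intro hs
    exact ⟨hS.lift s hs, hS.lift_f s hs⟩
  · rintro ⟨t, rfl⟩
    rw [Category.assoc, S.zero, comp_zero]

theorem rightComp_f_injective [Mono S.f] (W : C) :
    Function.Injective (Linear.rightComp K W S.f) :=
  fun _ _ h ↦ (cancel_mono S.f).1 h

theorem Exact.rightComp_g_surjective_of_finrank_eq (hS : S.Exact) [Mono S.f] (W : C)
    [FiniteDimensional K (W ⟶ S.X₁)] [FiniteDimensional K (W ⟶ S.X₂)]
    [FiniteDimensional K (W ⟶ S.X₃)]
    (hdim : Module.finrank K (W ⟶ S.X₂) =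
      Module.finrank K (W ⟶ S.X₁) + Module.finrank K (W ⟶ S.X₃)) :
    Function.Surjective (Linear.rightComp K W S.g) := by
  have hker : Module.finrank K (LinearMap.ker (Linear.rightComp K W S.g)) =
      Module.finrank K (W ⟶ S.X₁) := by
    rw [hS.ker_rightComp_g W,
      LinearMap.finrank_range_of_inj (rightComp_f_injective (K := K) W)]
  have hrank := LinearMap.finrank_range_add_finrank_ker (Linear.rightComp K W S.g)
  rw [← LinearMap.range_eq_top]
  exact Submodule.eq_top_of_finrank_eq (by omega)

end ShortComplex

end CategoryTheory

/-- In a `ℂ`-linear abelian category with finite length objects and finite-dimensional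
Hom-spaces, any short exact sequence `0 → A → E → B → 0` with `E ≅ A ⊕ B` splits. -/
theorem stmt4 {C : Type*} [Category C] [Abelian C] [Linear ℂ C]
    [∀ X Y : C, FiniteDimensional ℂ (X ⟶ Y)]
    [∀ X : C, IsArtinianObject X] [∀ X : C, IsNoetherianObject X]
    (S : ShortComplex C) (hS : S.ShortExact)
    (hiso : Nonempty (S.X₂ ≅ S.X₁ ⊞ S.X₃)) :
    ∃ s : S.X₃ ⟶ S.X₂, s ≫ S.g = 𝟙 S.X₃ := by
  obtain ⟨e⟩ := hiso
  have := hS.mono_f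
  have hdim : Module.finrank ℂ (S.X₃ ⟶ S.X₂) =
      Module.finrank ℂ (S.X₃ ⟶ S.X₁) + Module.finrank ℂ (S.X₃ ⟶ S.X₃) := by
    rw [(Linear.homCongr ℂ (Iso.refl S.X₃) e).finrank_eq, finrank_hom_biprod]
  exact hS.exact.rightComp_g_surjective_of_finrank_eq S.X₃ hdim (𝟙 S.X₃)
end

section
/- Let V be a finite-dimensional ℤ-graded complex vector space, and let A : V → V be a degree-1 linear map such that there is a short exact sequence of graded vector spaces with degree-1 endomorphisms 0 → (U, A|_U) → (V, A) → (V/U, Ā) → 0 where U is an A-invariant graded subspace. If (V, A) is isomorphic (as a graded vector space with degree-1 endomorphism) to the direct sum (U, A|_U) ⊕ (V/U, Ā), then the exact sequence splits: there is a graded linear section s : V/U → V with A ∘ s = s ∘ Ā. -/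
open Submodule

/-- The submodule of a hom space consisting of grading-preserving, intertwining maps. -/
def homSub {C V' : Type} [AddCommGroup C] [Module ℂ C] [AddCommGroup V'] [Module ℂ V']
    (W : ℤ → Submodule ℂ C) (G : ℤ → Submodule ℂ V')
    (F : V' →ₗ[ℂ] V') (F' : C →ₗ[ℂ] C) : Submodule ℂ (C →ₗ[ℂ] V') where
  carrier := {s | (∀ n, ∀ x ∈ W n, s x ∈ G n) ∧ ∀ x, F (s x) = s (F' x)}
  add_mem' := by
    rintro s t ⟨hs1, hs2⟩ ⟨ht1, ht2⟩
    exact ⟨fun n x hx => (G n).add_mem (hs1 n x hx) (ht1 n x hx),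
      fun x => by simp [hs2 x, ht2 x]⟩
  zero_mem' := ⟨fun n x _ => (G n).zero_mem, fun x => by simp⟩
  smul_mem' := by
    rintro c s ⟨hs1, hs2⟩
    exact ⟨fun n x hx => (G n).smul_mem c (hs1 n x hx), fun x => by simp [hs2 x]⟩

/-- A product of submodules is linearly equivalent to the product of the submodules. -/
def prodSubEquiv {M N : Type} [AddCommGroup M] [Module ℂ M] [AddCommGroup N] [Module ℂ N]
    (p : Submodule ℂ M) (q : Submodule ℂ N) : ↥(p.prod q) ≃ₗ[ℂ] ↥p × ↥q where
  toFun x := (⟨x.1.1, x.2.1⟩, ⟨x.1.2, x.2.2⟩)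
  invFun y := ⟨(y.1.1, y.2.1), ⟨y.1.2, y.2.2⟩⟩
  map_add' _ _ := rfl
  map_smul' _ _ := rfl
  left_inv _ := rfl
  right_inv _ := rfl

/-- Postcomposition with an equivalence onto a product splits a hom space. -/
def homProdEquiv {C M N P : Type} [AddCommGroup C] [Module ℂ C] [AddCommGroup M] [Module ℂ M]
    [AddCommGroup N] [Module ℂ N] [AddCommGroup P] [Module ℂ P]
    (e : M ≃ₗ[ℂ] N × P) : (C →ₗ[ℂ] M) ≃ₗ[ℂ] (C →ₗ[ℂ] N) × (C →ₗ[ℂ] P) where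
  toFun s := ((LinearMap.fst ℂ N P).comp (e.toLinearMap.comp s),
    (LinearMap.snd ℂ N P).comp (e.toLinearMap.comp s))
  invFun p := e.symm.toLinearMap.comp (p.1.prod p.2)
  map_add' s t := by ext x <;> simp
  map_smul' c s := by ext x <;> simp
  left_inv s := by
    ext x
    simp
  right_inv p := by ext x <;> simp


set_option maxHeartbeats 1000000 in
lemma splitAux {V C : Type} [AddCommGroup V] [Module ℂ V] [FiniteDimensional ℂ V]
    [AddCommGroup C] [Module ℂ C] [FiniteDimensional ℂ C]
    (Vgr : ℤ → Submodule ℂ V) (W : ℤ → Submodule ℂ C)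
    (A : V →ₗ[ℂ] V) (U : Submodule ℂ V) (AU : U →ₗ[ℂ] U)
    (hAU : ∀ x : U, (AU x : V) = A (x : V))
    (Abar : C →ₗ[ℂ] C) (π : V →ₗ[ℂ] C)
    (hπker : ∀ v, π v = 0 → v ∈ U) (hπU : ∀ x ∈ U, π x = 0)
    (hπA : ∀ v, Abar (π v) = π (A v))
    (hπgr : ∀ n, ∀ v ∈ Vgr n, π v ∈ W n)
    (e : V ≃ₗ[ℂ] U × C)
    (hegr : ∀ n, (Vgr n).map e.toLinearMap = ((Vgr n).comap U.subtype).prod (W n))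
    (heA : ∀ v : V, e (A v) = (AU (e v).1, Abar (e v).2)) :
    ∃ s : C →ₗ[ℂ] V, π.comp s = LinearMap.id ∧
      (∀ n, ∀ x ∈ W n, s x ∈ Vgr n) ∧ A.comp s = s.comp Abar := by
  classical
  -- Φ : HB → HC, s ↦ π ∘ s
  have hΦ0 : ∀ s ∈ homSub W Vgr A Abar, (LinearMap.llcomp ℂ C V C π) s ∈ homSub W W Abar Abar := by
    rintro s ⟨hs1, hs2⟩
    refine ⟨fun n x hx => hπgr n _ (hs1 n x hx), fun x => ?_⟩
    simp only [LinearMap.llcomp_apply, LinearMap.comp_apply]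
    rw [hπA (s x), hs2 x]
  set Φ : ↥(homSub W Vgr A Abar) →ₗ[ℂ] ↥(homSub W W Abar Abar) :=
    (LinearMap.llcomp ℂ C V C π).restrict hΦ0 with hΦ
  -- ι : HA → HB, u ↦ subtype ∘ u
  have hι0 : ∀ u ∈ homSub W (fun n => (Vgr n).comap U.subtype) AU Abar,
      (LinearMap.llcomp ℂ C U V U.subtype) u ∈ homSub W Vgr A Abar := by
    rintro u ⟨hu1, hu2⟩
    refine ⟨fun n x hx => hu1 n x hx, fun x => ?_⟩
    simp only [LinearMap.llcomp_apply, LinearMap.comp_apply, Submodule.coe_subtype]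
    rw [← hAU (u x), hu2 x]
  set ι : ↥(homSub W (fun n => (Vgr n).comap U.subtype) AU Abar) →ₗ[ℂ] ↥(homSub W Vgr A Abar) :=
    (LinearMap.llcomp ℂ C U V U.subtype).restrict hι0 with hι
  have hιinj : Function.Injective ι := by
    intro u v huv
    have h1 : (U.subtype.comp u.1 : C →ₗ[ℂ] V) = U.subtype.comp v.1 := congrArg Subtype.val huv
    exact Subtype.ext (LinearMap.ext fun x => Subtype.ext (LinearMap.congr_fun h1 x))
  have hrange : LinearMap.range ι = LinearMap.ker Φ := by
    ext s
    constructor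
    · rintro ⟨u, rfl⟩
      apply LinearMap.mem_ker.mpr
      apply Subtype.ext
      ext x
      simp only [hΦ, hι, LinearMap.restrict_apply, LinearMap.llcomp_apply,
        LinearMap.comp_apply, Submodule.coe_subtype, ZeroMemClass.coe_zero,
        LinearMap.zero_apply]
      exact hπU _ (SetLike.coe_mem _)
    · intro hs
      have hs0 : ∀ x : C, π (s.1 x) = 0 := by
        intro x
        have h2 : (π.comp s.1 : C →ₗ[ℂ] C) = 0 := congrArg Subtype.val (LinearMap.mem_ker.mp hs)
        exact LinearMap.congr_fun h2 x
      have hmem : ∀ x : C, s.1 x ∈ U := fun x => hπker _ (hs0 x)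
      refine ⟨⟨LinearMap.codRestrict U s.1 hmem, ?_, ?_⟩, ?_⟩
      · intro n x hx
        exact s.2.1 n x hx
      · intro x
        have := s.2.2 x
        apply Subtype.ext
        rw [hAU]
        simpa using this
      · apply Subtype.ext
        ext x
        simp [hι, LinearMap.restrict_apply]
  -- equivalence of HB with HA.prod HC via e
  have hE0apply : ∀ s : C →ₗ[ℂ] V, ∀ x : C,
      ((homProdEquiv e s).1 x = (e (s x)).1) ∧ ((homProdEquiv e s).2 x = (e (s x)).2) :=
    fun s x => ⟨rfl, rfl⟩
  have hmap : (homSub W Vgr A Abar).map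
      (homProdEquiv (C := C) e : (C →ₗ[ℂ] V) →ₗ[ℂ] _) =
      (homSub W (fun n => (Vgr n).comap U.subtype) AU Abar).prod (homSub W W Abar Abar) := by
    apply le_antisymm
    · rintro _ ⟨s, ⟨hs1, hs2⟩, rfl⟩
      simp only [LinearEquiv.coe_coe]
      have key : ∀ n, ∀ x ∈ W n,
          ((homProdEquiv e s).1 x ∈ (Vgr n).comap U.subtype ∧ (homProdEquiv e s).2 x ∈ W n) := by
        intro n x hx
        have h1 : e (s x) ∈ ((Vgr n).comap U.subtype).prod (W n) := by
          rw [← hegr n]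
          exact ⟨s x, hs1 n x hx, rfl⟩
        rw [(hE0apply s x).1, (hE0apply s x).2]
        exact ⟨h1.1, h1.2⟩
      have keyA : ∀ x : C, e (s (Abar x)) =
          (AU ((homProdEquiv e s).1 x), Abar ((homProdEquiv e s).2 x)) := by
        intro x
        rw [(hE0apply s x).1, (hE0apply s x).2, ← heA (s x), hs2 x]
      constructor
      · refine ⟨fun n x hx => (key n x hx).1, fun x => ?_⟩
        rw [(hE0apply s (Abar x)).1, keyA x]
      · refine ⟨fun n x hx => (key n x hx).2, fun x => ?_⟩
        rw [(hE0apply s (Abar x)).2, keyA x]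
    · rintro ⟨u, t⟩ ⟨⟨hu1, hu2⟩, ⟨ht1, ht2⟩⟩
      refine ⟨(homProdEquiv e).symm (u, t), ?_, by simp⟩
      have hsx : ∀ x : C, e ((homProdEquiv e).symm (u, t) x) = (u x, t x) := by
        intro x
        have h0 : homProdEquiv e ((homProdEquiv e).symm (u, t)) = (u, t) :=
          (homProdEquiv e).apply_symm_apply (u, t)
        have h1 := (hE0apply ((homProdEquiv e).symm (u, t)) x).1
        have h2 := (hE0apply ((homProdEquiv e).symm (u, t)) x).2
        rw [h0] at h1 h2
        exact Prod.ext h1.symm h2.symm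
      constructor
      · intro n x hx
        have hm : e ((homProdEquiv e).symm (u, t) x) ∈ ((Vgr n).comap U.subtype).prod (W n) := by
          rw [hsx x]; exact ⟨hu1 n x hx, ht1 n x hx⟩
        rw [← hegr n] at hm
        obtain ⟨y, hy, hey⟩ := hm
        have : y = (homProdEquiv e).symm (u, t) x := e.injective hey
        rwa [← this]
      · intro x
        apply e.injective
        rw [heA _, hsx x, hsx (Abar x)]
        exact Prod.ext (hu2 x) (ht2 x)
  -- dimension count
  haveI : Module.Free ℂ ↥(homSub W (fun n => (Vgr n).comap U.subtype) AU Abar) := by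
    exact Module.Free.of_divisionRing ℂ ↥(homSub W (fun n => (Vgr n).comap U.subtype) AU Abar)
  haveI : Module.Free ℂ ↥(homSub W W Abar Abar) := by exact Module.Free.of_divisionRing ℂ ↥(homSub W W Abar Abar)
  have E : ↥(homSub W Vgr A Abar) ≃ₗ[ℂ]
      ↥(homSub W (fun n => (Vgr n).comap U.subtype) AU Abar) × ↥(homSub W W Abar Abar) :=
    ((homProdEquiv e).submoduleMap (homSub W Vgr A Abar)).trans
      ((LinearEquiv.ofEq _ _ hmap).trans (prodSubEquiv _ _))
  have hdim : Module.finrank ℂ ↥(homSub W Vgr A Abar) =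
      Module.finrank ℂ ↥(homSub W (fun n => (Vgr n).comap U.subtype) AU Abar) +
      Module.finrank ℂ ↥(homSub W W Abar Abar) :=
    E.finrank_eq.trans Module.finrank_prod
  have EK : ↥(homSub W (fun n => (Vgr n).comap U.subtype) AU Abar) ≃ₗ[ℂ]
      ↥(LinearMap.ker Φ) :=
    (LinearEquiv.ofInjective ι hιinj).trans (LinearEquiv.ofEq _ _ hrange)
  have hker : Module.finrank ℂ ↥(LinearMap.ker Φ) =
      Module.finrank ℂ ↥(homSub W (fun n => (Vgr n).comap U.subtype) AU Abar) :=
    EK.finrank_eq.symm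
  have hsurj : LinearMap.range Φ = ⊤ := by
    apply Submodule.eq_top_of_finrank_eq
    have h1 := LinearMap.finrank_range_add_finrank_ker Φ
    omega
  have hid : (LinearMap.id : C →ₗ[ℂ] C) ∈ homSub W W Abar Abar :=
    ⟨fun n x hx => hx, fun x => rfl⟩
  obtain ⟨s, hsval⟩ : ∃ s : ↥(homSub W Vgr A Abar), Φ s = ⟨LinearMap.id, hid⟩ := by
    have hmem : (⟨LinearMap.id, hid⟩ : ↥(homSub W W Abar Abar)) ∈ LinearMap.range Φ :=
      hsurj ▸ Submodule.mem_top
    exact hmem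
  exact ⟨s.1, congrArg Subtype.val hsval, s.2.1, LinearMap.ext fun x => s.2.2 x⟩

/-- For finite-dimensional ℤ-graded complex vector spaces with degree-1 endomorphisms:
if `0 → (U, A|U) → (V, A) → (V/U, Ā) → 0` is a short exact sequence and
`(V, A) ≅ (U, A|U) ⊕ (V/U, Ā)`, then the sequence splits by a graded section
intertwining the endomorphisms. -/
theorem stmt5 {V : Type} [AddCommGroup V] [Module ℂ V] [FiniteDimensional ℂ V]
    (Vgr : ℤ → Submodule ℂ V) (hinternal : DirectSum.IsInternal Vgr)
    (A : V →ₗ[ℂ] V) (hA : ∀ n, (Vgr n).map A ≤ Vgr (n + 1))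
    (U : Submodule ℂ V) (hUgr : U = ⨆ n, U ⊓ Vgr n)
    (hUinv : ∀ x ∈ U, A x ∈ U)
    (AU : U →ₗ[ℂ] U) (hAU : ∀ x : U, (AU x : V) = A (x : V))
    (Abar : (V ⧸ U) →ₗ[ℂ] (V ⧸ U)) (hAbar : Abar.comp U.mkQ = U.mkQ.comp A)
    (e : V ≃ₗ[ℂ] U × (V ⧸ U))
    -- `e` is grading preserving ...
    (hegr : ∀ n, (Vgr n).map e.toLinearMap =
      ((Vgr n).comap U.subtype).prod ((Vgr n).map U.mkQ))
    -- ... and intertwines `A` with `A|U ⊕ Ā`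
    (heA : ∀ v : V, e (A v) = (AU (e v).1, Abar (e v).2)) :
    ∃ s : (V ⧸ U) →ₗ[ℂ] V,
      U.mkQ.comp s = LinearMap.id ∧
      (∀ n, ((Vgr n).map U.mkQ).map s ≤ Vgr n) ∧
      A.comp s = s.comp Abar := by
  obtain ⟨s, h1, h2, h3⟩ := splitAux Vgr (fun n => (Vgr n).map U.mkQ) A U AU hAU Abar U.mkQ
    (fun v hv => (Submodule.Quotient.mk_eq_zero U).mp hv)
    (fun x hx => (Submodule.Quotient.mk_eq_zero U).mpr hx)
    (fun v => LinearMap.congr_fun hAbar v)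
    (fun n v hv => Submodule.mem_map_of_mem hv)
    e hegr heA
  refine ⟨s, h1, fun n => ?_, h3⟩
  rintro _ ⟨x, hx, rfl⟩
  exact h2 n x hx
end

section
/- Let V be a finite-dimensional ℤ-graded complex vector space and A, B degree-1 nilpotent endomorphisms of V (both shifting degree by +1). Suppose for every r ≥ 0 and n ∈ ℤ we have rank(Bʳ|_{V_n}) ≤ rank(Aʳ|_{V_n}), and also rank(Bʳ|_{V_n}) ≥ rank(Aʳ|_{V_n}). Then there is a grading-preserving linear automorphism g of V with B = g A g⁻¹. -/
/-!
Every degree-one nilpotent `A` has a graded Jordan basis: finitely many strings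
`v, A v, …, A^(l-1) v` with `v` homogeneous of degree `d` and `A^l v = 0`. It is built by
induction on dimension: a graded Jordan basis of `A W` is lifted through `A` to homogeneous
preimages, and the ends of the lifted strings are completed to a homogeneous basis of
`ker A ⊓ W` by strings of length one.

In such a basis `rank (A^r|V_n)` counts the strings `[d, d + l)` containing both `n` and `n + r`,
and inclusion–exclusion recovers from these counts the number of strings of each type `(d, l)`.
Two operators with the same ranks therefore have bases with the same types, and matching the
strings gives the graded conjugating automorphism.
-/

open Module Submodule Set

universe u

section JordanChains

variable {K : Type*} {V : Type u} [Field K] [AddCommGroup V] [Module K V]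

def jordanChains (A : Module.End K V) {ι : Type*} (l : ι → ℕ) (v : ι → V) :
    (Σ i, Fin (l i)) → V :=
  fun p => (A ^ (p.2 : ℕ)) (v p.1)

variable {A : Module.End K V} {ι ζ : Type*}

theorem pow_apply_jordanChains {l : ι → ℕ} {v : ι → V} (hv : ∀ i, (A ^ l i) (v i) = 0)
    (r : ℕ) (i : ι) (j : Fin (l i)) :
    (A ^ r) (jordanChains A l v ⟨i, j⟩) =
      if h : (j : ℕ) + r < l i then jordanChains A l v ⟨i, ⟨j + r, h⟩⟩ else 0 := by
  simp only [jordanChains, ← Module.End.mul_apply, ← pow_add, add_comm r]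
  split_ifs with h
  · rfl
  · obtain ⟨c, hc⟩ := Nat.exists_eq_add_of_le (not_lt.mp h)
    rw [hc, add_comm, pow_add, Module.End.mul_apply, hv, map_zero]

theorem jordanChains_mem_of_invariant {W : Submodule K V} (hWA : ∀ x ∈ W, A x ∈ W)
    {l : ι → ℕ} {v : ι → V} (hv : ∀ i, v i ∈ W) (p : Σ i, Fin (l i)) :
    jordanChains A l v p ∈ W := by
  simp only [jordanChains]
  induction (p.2 : ℕ) with
  | zero => exact hv p.1
  | succ j ih => rw [pow_succ', Module.End.mul_apply]; exact hWA _ ih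

theorem span_jordanChains_lift {W : Submodule K V} (hWA : ∀ x ∈ W, A x ∈ W)
    {l : ι → ℕ} {u : ι → V} (hu : ∀ i, u i ∈ W)
    (hspan : span K (range (jordanChains A l (A ∘ u))) = W.map A) {z : ζ → V}
    (hker : span K (range (Sum.elim (fun i => (A ^ l i) (u i)) z)) = LinearMap.ker A ⊓ W) :
    span K (range (jordanChains A (Sum.elim (fun i => l i + 1) fun _ => 1) (Sum.elim u z))) =
      W := by
  set S := span K (range (jordanChains A (Sum.elim (fun i => l i + 1) fun _ => 1) (Sum.elim u z)))
  set U := span K (range (jordanChains A l u))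
  have hz : ∀ k, z k ∈ W := fun k =>
    (hker.le (subset_span ⟨Sum.inr k, rfl⟩) : z k ∈ LinearMap.ker A ⊓ W).2
  have hUS : U ≤ S ⊓ W := by
    rw [span_le]
    rintro _ ⟨⟨i, j⟩, rfl⟩
    exact ⟨subset_span ⟨⟨Sum.inl i, ⟨j, by simp⟩⟩, rfl⟩, jordanChains_mem_of_invariant hWA hu _⟩
  have hmapU : U.map A = W.map A := by
    rw [map_span, ← range_comp, ← hspan]
    congr 2
    ext ⟨i, j⟩
    simp only [Function.comp_apply, jordanChains, ← Module.End.mul_apply, ← pow_succ, pow_succ']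
  have hkerS : LinearMap.ker A ⊓ W ≤ S := by
    rw [← hker, span_le]
    rintro _ ⟨i | k, rfl⟩
    · exact subset_span ⟨⟨Sum.inl i, ⟨l i, by simp⟩⟩, rfl⟩
    · exact subset_span ⟨⟨Sum.inr k, ⟨0, by simp⟩⟩, by simp [jordanChains]⟩
  refine le_antisymm (span_le.mpr ?_) fun x hx => ?_
  · rintro _ ⟨p, rfl⟩
    exact jordanChains_mem_of_invariant hWA (by rintro (i | k) <;> simp [hu, hz]) p
  obtain ⟨y, hyU, hAy⟩ : A x ∈ U.map A := hmapU ▸ mem_map_of_mem hx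
  have hxy : x - y ∈ LinearMap.ker A ⊓ W :=
    ⟨by simp [LinearMap.mem_ker, hAy], sub_mem hx (hUS hyU).2⟩
  simpa using add_mem (hkerS hxy) (hUS hyU).1

theorem finrank_map_add_finrank_ker_inf [FiniteDimensional K V] {V₂ : Type*} [AddCommGroup V₂]
    [Module K V₂] (f : V →ₗ[K] V₂) (W : Submodule K V) :
    finrank K (W.map f) + finrank K (LinearMap.ker f ⊓ W : Submodule K V) = finrank K W := by
  have h := LinearMap.finrank_range_add_finrank_ker (f.domRestrict W)
  rwa [LinearMap.range_domRestrict, LinearMap.ker_domRestrict, ← finrank_map_subtype_eq,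
    map_comap_subtype, inf_comm] at h

theorem linearIndependent_jordanChains_lift [FiniteDimensional K V] [Fintype ι] [Fintype ζ]
    {W : Submodule K V} (hWA : ∀ x ∈ W, A x ∈ W) {l : ι → ℕ} {u : ι → V} (hu : ∀ i, u i ∈ W)
    (hli : LinearIndependent K (jordanChains A l (A ∘ u)))
    (hspan : span K (range (jordanChains A l (A ∘ u))) = W.map A) {z : ζ → V}
    (hends : LinearIndependent K (Sum.elim (fun i => (A ^ l i) (u i)) z))
    (hker : span K (range (Sum.elim (fun i => (A ^ l i) (u i)) z)) = LinearMap.ker A ⊓ W) :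
    LinearIndependent K
      (jordanChains A (Sum.elim (fun i => l i + 1) fun _ => 1) (Sum.elim u z)) := by
  rw [linearIndependent_iff_card_eq_finrank_span, Set.finrank,
    span_jordanChains_lift hWA hu hspan hker, ← finrank_map_add_finrank_ker_inf A W, ← hspan,
    ← hker, finrank_span_eq_card hli, finrank_span_eq_card hends]
  simp [Fintype.card_sigma, Finset.sum_add_distrib]
  ring

theorem finrank_map_lt_of_isNilpotent [FiniteDimensional K V] (hA : IsNilpotent A)
    {W : Submodule K V} (hWA : ∀ x ∈ W, A x ∈ W) (hW : W ≠ ⊥) :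
    finrank K (W.map A) < finrank K W := by
  refine (finrank_map_le A W).lt_of_ne fun h => hW ?_
  have hmap : W.map A = W := eq_of_le_of_finrank_eq (map_le_iff_le_comap.mpr hWA) h
  obtain ⟨N, hN⟩ := hA
  have hpow : ∀ k : ℕ, W.map (A ^ k) = W := by
    intro k
    induction k with
    | zero => exact map_id W
    | succ k ih => rw [pow_succ, Module.End.mul_eq_comp, map_comp, hmap, ih]
  simpa [hN] using (hpow N).symm

end JordanChains

section StringCount

def chainCount {ι : Type*} [Fintype ι] (d : ι → ℤ) (l : ι → ℕ) (n : ℤ) (r : ℕ) : ℕ :=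
  Fintype.card {i // d i ≤ n ∧ n + r < d i + l i}

variable {ι ι' : Type*} [Fintype ι] [Fintype ι']

-- `[d i, d i + l i)` starts at `s` iff it contains `s` but not `s - 1`, and ends at `s + r` iff
-- it contains `s + r` but not `s + r + 1`.
theorem card_fiber_eq_chainCount (d : ι → ℤ) (l : ι → ℕ) (s : ℤ) (r : ℕ) :
    (Fintype.card {i // (d i, l i) = (s, r + 1)} : ℤ) =
      chainCount d l s r - chainCount d l (s - 1) (r + 1) - chainCount d l s (r + 1) +
        chainCount d l (s - 1) (r + 2) := by
  simp only [chainCount, Fintype.card_subtype, Finset.card_filter, Nat.cast_sum, Nat.cast_ite,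
    Nat.cast_one, Nat.cast_zero, ← Finset.sum_sub_distrib, ← Finset.sum_add_distrib]
  refine Finset.sum_congr rfl fun i _ => ?_
  simp only [Prod.mk.injEq]
  split_ifs <;> omega

theorem exists_equiv_of_chainCount_eq {d : ι → ℤ} {l : ι → ℕ} {d' : ι' → ℤ} {l' : ι' → ℕ}
    (hl : ∀ i, 0 < l i) (hl' : ∀ i, 0 < l' i)
    (h : ∀ n r, chainCount d l n r = chainCount d' l' n r) :
    ∃ σ : ι ≃ ι', ∀ i, d' (σ i) = d i ∧ l' (σ i) = l i := by
  have hfiber : ∀ c : ℤ × ℕ,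
      Fintype.card {i // (d i, l i) = c} = Fintype.card {i // (d' i, l' i) = c} := by
    rintro ⟨s, _ | r⟩
    · simp [Prod.ext_iff, (hl _).ne', (hl' _).ne']
    · have := card_fiber_eq_chainCount d l s r
      rw [h, h, h, h, ← card_fiber_eq_chainCount] at this
      exact_mod_cast this
  exact ⟨Equiv.ofFiberEquiv fun c => Fintype.equivOfCardEq (hfiber c),
    fun i => Prod.ext_iff.mp (Equiv.ofFiberEquiv_map (f := fun i => (d i, l i))
      (g := fun i => (d' i, l' i)) _ i)⟩

end StringCount

section Homogeneous

open DirectSum SetLike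

variable {K : Type*} {V : Type u} [Field K] [AddCommGroup V] [Module K V]
variable {ι : Type*} [DecidableEq ι] (ℳ : ι → Submodule K V) [Decomposition ℳ]

theorem decompose_mem_span_image {σ : Type*} {f : σ → V} {d : σ → ι} (hf : ∀ p, f p ∈ ℳ (d p))
    {x : V} (hx : x ∈ span K (range f)) (n : ι) :
    (decompose ℳ x n : V) ∈ span K (f '' {p | d p = n}) := by
  induction hx using span_induction with
  | mem _ hy =>
    obtain ⟨p, rfl⟩ := hy
    by_cases hp : d p = n
    · rw [decompose_of_mem_same ℳ (hp ▸ hf p)]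
      exact subset_span ⟨p, hp, rfl⟩
    · rw [decompose_of_mem_ne ℳ (hf p) hp]
      exact zero_mem _
  | zero => simp
  | add x y _ _ hx hy => simpa using add_mem hx hy
  | smul a x _ hx => rw [decompose_smul]; exact smul_mem _ a hx

variable {ℳ} {W : Submodule K V}

theorem Submodule.IsHomogeneous.span_homogeneousElem (hW : W.IsHomogeneous ℳ) :
    span K {x | x ∈ W ∧ IsHomogeneousElem ℳ x} = W := by
  classical
  refine le_antisymm (span_le.mpr fun x hx => hx.1) fun x hx => ?_
  rw [← sum_support_decompose ℳ x]
  exact sum_mem fun n _ => subset_span ⟨hW n hx, n, (decompose ℳ x n).2⟩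

theorem Submodule.IsHomogeneous.exists_extend_by_homogeneous [FiniteDimensional K V]
    (hW : W.IsHomogeneous ℳ) {κ : Type*} {e : κ → V} (he : LinearIndependent K e)
    (heW : ∀ i, e i ∈ W) :
    ∃ (ζ : Type u) (_ : Fintype ζ) (z : ζ → V), (∀ k, IsHomogeneousElem ℳ (z k)) ∧
      LinearIndependent K (Sum.elim e z) ∧ span K (range (Sum.elim e z)) = W := by
  obtain ⟨b, hbt, heb, htb, hb⟩ := exists_linearIndepOn_id_extension he.linearIndepOn_id
    (subset_union_left (t := {x | x ∈ W ∧ IsHomogeneousElem ℳ x}))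
  have hrange : range (Sum.elim e ((↑) : ↥(b \ range e) → V)) = b := by
    rw [Sum.elim_range, Subtype.range_coe, union_sdiff_cancel heb]
  have hinj : Function.Injective (Sum.elim e ((↑) : ↥(b \ range e) → V)) :=
    he.injective.sumElim Subtype.val_injective fun i k h => k.2.2 ⟨i, h⟩
  have : Finite ↥(b \ range e) := (hb.mono sdiff_subset).finite
  refine ⟨↥(b \ range e), Fintype.ofFinite _, (↑), fun k => ?_,
    (linearIndepOn_id_range_iff hinj).mp (hrange.symm ▸ hb), ?_⟩
  · obtain hk | hk := hbt k.2.1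
    · exact absurd hk k.2.2
    · exact hk.2
  rw [hrange]
  refine le_antisymm (span_le.mpr fun x hx => ?_) ?_
  · obtain ⟨i, rfl⟩ | hx := hbt hx
    · exact heW i
    · exact hx.1
  · rw [← hW.span_homogeneousElem, span_le]
    exact subset_union_right.trans htb

end Homogeneous

section GradedJordanBasis

open DirectSum

variable {K : Type*} {V : Type u} [Field K] [AddCommGroup V] [Module K V]
variable {ℳ : ℤ → Submodule K V} {A B : Module.End K V} {W : Submodule K V}

variable (ℳ A W) in
structure GradedJordanBasis where
  ι : Type u
  [fintype : Fintype ι]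
  deg : ι → ℤ
  len : ι → ℕ
  gen : ι → V
  len_pos : ∀ i, 0 < len i
  gen_mem : ∀ i, gen i ∈ ℳ (deg i)
  pow_len_gen : ∀ i, (A ^ len i) (gen i) = 0
  linearIndependent : LinearIndependent K (jordanChains A len gen)
  span_eq : span K (range (jordanChains A len gen)) = W

attribute [instance] GradedJordanBasis.fintype

noncomputable def GradedJordanBasis.basis (b : GradedJordanBasis ℳ A ⊤) :
    Basis (Σ i, Fin (b.len i)) K V :=
  Basis.mk b.linearIndependent b.span_eq.ge

theorem GradedJordanBasis.basis_apply (b : GradedJordanBasis ℳ A ⊤) (p : Σ i, Fin (b.len i)) :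
    b.basis p = jordanChains A b.len b.gen p :=
  Basis.mk_apply _ _ _

variable (hA : ∀ n, (ℳ n).map A ≤ ℳ (n + 1))
include hA

theorem pow_apply_mem {m : ℤ} {x : V} (hx : x ∈ ℳ m) (j : ℕ) : (A ^ j) x ∈ ℳ (m + j) := by
  induction j with
  | zero => simpa using hx
  | succ j ih =>
    rw [pow_succ', Module.End.mul_apply, Nat.cast_succ, ← add_assoc]
    exact hA _ (mem_map_of_mem ih)

theorem GradedJordanBasis.jordanChains_mem (b : GradedJordanBasis ℳ A W)
    (p : Σ i, Fin (b.len i)) : jordanChains A b.len b.gen p ∈ ℳ (b.deg p.1 + p.2) :=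
  pow_apply_mem hA (b.gen_mem p.1) p.2

variable [Decomposition ℳ]

theorem decompose_apply_of_degree_one (x : V) (n : ℤ) :
    (decompose ℳ (A x) (n + 1) : V) = A (decompose ℳ x n) := by
  induction x using Decomposition.inductionOn ℳ with
  | zero => simp
  | @homogeneous i m =>
    obtain ⟨m, hm⟩ := m
    have hAm : A m ∈ ℳ (i + 1) := hA i (mem_map_of_mem hm)
    by_cases h : i = n
    · subst h
      rw [decompose_of_mem_same ℳ hm, decompose_of_mem_same ℳ hAm]
    · rw [decompose_of_mem_ne ℳ hm h, decompose_of_mem_ne ℳ hAm (by omega), map_zero]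
  | add x y hx hy => simp [decompose_add, hx, hy]

theorem Submodule.IsHomogeneous.map_of_degree_one (hW : W.IsHomogeneous ℳ) :
    (W.map A).IsHomogeneous ℳ := by
  rintro n _ ⟨x, hx, rfl⟩
  rw [← sub_add_cancel n 1, decompose_apply_of_degree_one hA]
  exact mem_map_of_mem (hW _ hx)

theorem Submodule.IsHomogeneous.ker_inf (hW : W.IsHomogeneous ℳ) :
    (LinearMap.ker A ⊓ W).IsHomogeneous ℳ := by
  rintro n x ⟨hx, hxW⟩
  refine ⟨?_, hW n hxW⟩
  change A _ = 0
  rw [← decompose_apply_of_degree_one hA, show A x = 0 from hx]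
  simp

theorem Submodule.IsHomogeneous.exists_mem_preimage (hW : W.IsHomogeneous ℳ) {n : ℤ} {y : V}
    (hyW : y ∈ W.map A) (hy : y ∈ ℳ n) : ∃ x ∈ W, x ∈ ℳ (n - 1) ∧ A x = y := by
  obtain ⟨x, hx, rfl⟩ := hyW
  refine ⟨_, hW (n - 1) hx, (decompose ℳ x _).2, ?_⟩
  rw [← decompose_apply_of_degree_one hA, sub_add_cancel, decompose_of_mem_same ℳ hy]

theorem GradedJordanBasis.nonempty_of_map [FiniteDimensional K V] (hW : W.IsHomogeneous ℳ)
    (hWA : ∀ x ∈ W, A x ∈ W) (b : GradedJordanBasis ℳ A (W.map A)) :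
    Nonempty (GradedJordanBasis ℳ A W) := by
  have hgen : ∀ i, b.gen i ∈ W.map A := fun i =>
    b.span_eq.le (subset_span ⟨⟨i, ⟨0, b.len_pos i⟩⟩, by simp [jordanChains]⟩)
  choose u huW hudeg hAu using fun i => hW.exists_mem_preimage hA (hgen i) (b.gen_mem i)
  have hAu' : A ∘ u = b.gen := funext hAu
  have hends : (fun i => (A ^ b.len i) (u i)) = jordanChains A b.len b.gen ∘
      fun i => ⟨i, ⟨b.len i - 1, Nat.sub_one_lt_of_lt (b.len_pos i)⟩⟩ := by
    funext i
    simp only [Function.comp_apply, jordanChains, ← hAu, ← Module.End.mul_apply, ← pow_succ]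
    rw [Nat.sub_one_add_one (b.len_pos i).ne']
  have hendsK : ∀ i, (A ^ b.len i) (u i) ∈ LinearMap.ker A ⊓ W := fun i =>
    ⟨LinearMap.mem_ker.mpr <| by rw [← Module.End.mul_apply, ← pow_succ', pow_succ,
        Module.End.mul_apply, hAu, b.pow_len_gen],
      jordanChains_mem_of_invariant hWA huW (l := fun i => b.len i + 1)
        ⟨i, ⟨b.len i, lt_add_one _⟩⟩⟩
  obtain ⟨ζ, _, z, hz, hli, hspan⟩ := (hW.ker_inf hA).exists_extend_by_homogeneous
    (hends ▸ b.linearIndependent.comp _ fun i j h => congrArg Sigma.fst h) hendsK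
  choose dz hdz using hz
  exact ⟨{
    ι := b.ι ⊕ ζ
    deg := Sum.elim (fun i => b.deg i - 1) dz
    len := Sum.elim (fun i => b.len i + 1) fun _ => 1
    gen := Sum.elim u z
    len_pos := by rintro (i | k) <;> simp
    gen_mem := by rintro (i | k); exacts [hudeg i, hdz k]
    pow_len_gen := by
      rintro (i | k)
      · simp [pow_succ, hAu, b.pow_len_gen]
      · simpa using (hspan.le (subset_span ⟨Sum.inr k, rfl⟩) : z k ∈ LinearMap.ker A ⊓ W).1
    linearIndependent := linearIndependent_jordanChains_lift hWA huW
      (hAu' ▸ b.linearIndependent) (hAu' ▸ b.span_eq) hli hspan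
    span_eq := span_jordanChains_lift hWA huW (hAu' ▸ b.span_eq) hspan }⟩

theorem GradedJordanBasis.nonempty [FiniteDimensional K V] (hAnil : IsNilpotent A)
    (hW : W.IsHomogeneous ℳ) (hWA : ∀ x ∈ W, A x ∈ W) : Nonempty (GradedJordanBasis ℳ A W) := by
  induction h : finrank K W using Nat.strong_induction_on generalizing W with
  | _ d ih =>
    by_cases hbot : W = ⊥
    · subst hbot
      exact ⟨{
        ι := PEmpty
        deg := PEmpty.elim
        len := PEmpty.elim
        gen := PEmpty.elim
        len_pos := nofun
        gen_mem := nofun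
        pow_len_gen := nofun
        linearIndependent := linearIndependent_empty_type
        span_eq := by simp [range_eq_empty] }⟩
    obtain ⟨b⟩ := ih _ (h ▸ finrank_map_lt_of_isNilpotent hAnil hWA hbot)
      (hW.map_of_degree_one hA) (fun _ ⟨x, hx, hAx⟩ => hAx ▸ mem_map_of_mem (hWA x hx)) rfl
    exact b.nonempty_of_map hA hW hWA

theorem GradedJordanBasis.eq_span_image (b : GradedJordanBasis ℳ A ⊤) (n : ℤ) :
    ℳ n = span K (jordanChains A b.len b.gen '' {p | b.deg p.1 + p.2 = n}) := by
  refine le_antisymm (fun x hx => ?_) (span_le.mpr ?_)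
  · rw [← decompose_of_mem_same ℳ hx]
    exact decompose_mem_span_image ℳ (b.jordanChains_mem hA) (by rw [b.span_eq]; exact mem_top) n
  · rintro _ ⟨p, hp, rfl⟩
    exact hp ▸ b.jordanChains_mem hA p

theorem GradedJordanBasis.finrank_map_pow (b : GradedJordanBasis ℳ A ⊤) (r : ℕ) (n : ℤ) :
    finrank K ((ℳ n).map (A ^ r)) = chainCount b.deg b.len n r := by
  let f : {i // b.deg i ≤ n ∧ n + r < b.deg i + b.len i} → Σ i, Fin (b.len i) :=
    fun i => ⟨i, ⟨(n - b.deg i).toNat + r, by omega⟩⟩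
  suffices (ℳ n).map (A ^ r) = span K (range (jordanChains A b.len b.gen ∘ f)) by
    rw [this, finrank_span_eq_card (b.linearIndependent.comp f
      fun i j h => Subtype.ext (congrArg Sigma.fst h))]
    rfl
  rw [b.eq_span_image hA n, map_span, ← image_comp]
  refine le_antisymm (span_le.mpr ?_) (span_le.mpr ?_)
  · rintro _ ⟨⟨i, j⟩, hp, rfl⟩
    have hp : b.deg i + j = n := hp
    simp only [Function.comp_apply, pow_apply_jordanChains b.pow_len_gen]
    split_ifs with h
    · refine subset_span ⟨⟨i, by omega, by omega⟩, ?_⟩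
      simp only [f, Function.comp_apply, jordanChains]
      congr 2
      omega
    · exact zero_mem _
  · rintro _ ⟨i, rfl⟩
    refine subset_span ⟨⟨i, ⟨(n - b.deg i).toNat, by omega⟩⟩, by simp; omega, ?_⟩
    simp [f, jordanChains, ← Module.End.mul_apply, ← pow_add, add_comm]

theorem GradedJordanBasis.exists_conj [FiniteDimensional K V] (hB : ∀ n, (ℳ n).map B ≤ ℳ (n + 1))
    (bA : GradedJordanBasis ℳ A ⊤) (bB : GradedJordanBasis ℳ B ⊤) (σ : bA.ι ≃ bB.ι)
    (hσ : ∀ i, bB.deg (σ i) = bA.deg i ∧ bB.len (σ i) = bA.len i) :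
    ∃ g : V ≃ₗ[K] V, (∀ n, (ℳ n).map (g : V →ₗ[K] V) = ℳ n) ∧ ∀ v, B v = g (A (g.symm v)) := by
  let g := bA.basis.equiv bB.basis (Equiv.sigmaCongr σ fun i => finCongr (hσ i).2.symm)
  have hg : ∀ i j, g (jordanChains A bA.len bA.gen ⟨i, j⟩) =
      jordanChains B bB.len bB.gen ⟨σ i, ⟨j, j.2.trans_eq (hσ i).2.symm⟩⟩ := fun i j => by
    rw [← bA.basis_apply, Basis.equiv_apply, bB.basis_apply]
    rfl
  refine ⟨g, fun n => ?_, fun v => ?_⟩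
  · refine eq_of_le_of_finrank_eq ?_ (g.finrank_map_eq _)
    refine (map_mono (bA.eq_span_image hA n).le).trans ?_
    rw [map_span, span_le]
    rintro _ ⟨_, ⟨⟨i, j⟩, hp, rfl⟩, rfl⟩
    have hdeg : bB.deg (σ i) + (j : ℕ) = n := by rw [(hσ i).1]; exact hp
    rw [SetLike.mem_coe, LinearEquiv.coe_coe, hg, ← hdeg]
    exact bB.jordanChains_mem hB ⟨σ i, ⟨j, j.2.trans_eq (hσ i).2.symm⟩⟩
  · have hconj : B ∘ₗ g = g ∘ₗ A := bA.basis.ext fun ⟨i, j⟩ => by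
      have hA1 := pow_apply_jordanChains bA.pow_len_gen 1 i j
      have hB1 := pow_apply_jordanChains bB.pow_len_gen 1 (σ i) ⟨j, j.2.trans_eq (hσ i).2.symm⟩
      rw [pow_one] at hA1 hB1
      simp only [LinearMap.comp_apply, LinearEquiv.coe_coe, bA.basis_apply, hg, hA1, hB1]
      have := (hσ i).2
      split_ifs <;> first | omega | simp [hg]
    simpa using congr($hconj (g.symm v))

end GradedJordanBasis

/-- Graded Jordan form: two degree-1 nilpotent endomorphisms of a finite-dimensional
graded complex vector space with the same ranks `rank(·ʳ|_{V_n})` for all `r, n` are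
conjugate by a grading-preserving automorphism. -/
theorem stmt7 {V : Type} [AddCommGroup V] [Module ℂ V] [FiniteDimensional ℂ V]
    (Vgr : ℤ → Submodule ℂ V) (hint : DirectSum.IsInternal Vgr)
    (A B : Module.End ℂ V)
    (hAgr : ∀ n, (Vgr n).map A ≤ Vgr (n + 1)) (hBgr : ∀ n, (Vgr n).map B ≤ Vgr (n + 1))
    (hAnil : IsNilpotent A) (hBnil : IsNilpotent B)
    (hle : ∀ (r : ℕ) (n : ℤ),
      Module.finrank ℂ ((Vgr n).map (B ^ r)) ≤ Module.finrank ℂ ((Vgr n).map (A ^ r)))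
    (hge : ∀ (r : ℕ) (n : ℤ),
      Module.finrank ℂ ((Vgr n).map (A ^ r)) ≤ Module.finrank ℂ ((Vgr n).map (B ^ r))) :
    ∃ g : V ≃ₗ[ℂ] V,
      (∀ n, (Vgr n).map (g : V →ₗ[ℂ] V) = Vgr n) ∧
      ∀ v : V, B v = g (A (g.symm v)) := by
  let := hint.chooseDecomposition
  obtain ⟨bA⟩ := GradedJordanBasis.nonempty hAgr hAnil (W := ⊤) (fun _ _ _ => trivial)
    fun _ _ => trivial
  obtain ⟨bB⟩ := GradedJordanBasis.nonempty hBgr hBnil (W := ⊤) (fun _ _ _ => trivial)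
    fun _ _ => trivial
  obtain ⟨σ, hσ⟩ := exists_equiv_of_chainCount_eq bA.len_pos bB.len_pos fun n r => by
    rw [← bA.finrank_map_pow hAgr, ← bB.finrank_map_pow hBgr]
    exact le_antisymm (hge r n) (hle r n)
  exact bA.exists_conj hAgr hBgr bB σ hσ
end

section
/- Let m = Σ_{i∈I} Δ_i be a multisegment over ℤ with leading indices i₁,...,i_m (defined by the Mœglin–Waldspurger algorithm). Then the set X_{m⁻} \ X_m of pairs in the precedence-relation set of m⁻ not in that of m equals {(i_j, i) : j = 2,...,m, (i_j, i) ∈ X_{m⁻}, e(Δ_{i_j}) = e(Δ_i)}, where X_n = {(i,j) : Δ_i^{(n)} ≺ Δ_j^{(n)}} for the segments of the multisegment n. -/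
/-- Precedence of segments over `ℤ`. -/
def SegPrec (a b a' b' : ℤ) : Prop := a < a' ∧ a' ≤ b + 1 ∧ b < b'

/-- For a multisegment `m` with leading indices `L 0, ..., L (m-1)` (Mœglin–Waldspurger),
the set `X_{m⁻} \ X_m` equals
`{(L j, i) : 1 ≤ j < m, (L j, i) ∈ X_{m⁻}, e(Δ_{L j}) = e(Δ_i)}`.
Here the truncated endpoints are recorded by `bm`. -/
theorem stmt9 {ι : Type} [Fintype ι]
    (a b : ι → ℤ) (hab : ∀ i, a i ≤ b i)
    (m : ℕ) (hm : 0 < m) (L : ℕ → ι)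
    -- `L 0` has maximal end, and is lexicographically maximal among such segments
    (h1 : ∀ i, b i ≤ b (L 0))
    (h2 : ∀ i, b i = b (L 0) → a i ≤ a (L 0))
    -- each `Δ_{L (j+1)}` precedes `Δ_{L j}`, ends one lower, and is maximal as such
    (h3 : ∀ j, j + 1 < m →
      SegPrec (a (L (j + 1))) (b (L (j + 1))) (a (L j)) (b (L j)) ∧
      b (L (j + 1)) = b (L j) - 1)
    (h4 : ∀ j, j + 1 < m → ∀ i,
      SegPrec (a i) (b i) (a (L j)) (b (L j)) → b i = b (L j) - 1 → a i ≤ a (L (j + 1)))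
    -- the chain cannot be continued
    (h5 : ∀ i, ¬(SegPrec (a i) (b i) (a (L (m - 1))) (b (L (m - 1))) ∧
      b i = b (L (m - 1)) - 1))
    -- `bm` records the endpoints of the segments of `m⁻`
    (bm : ι → ℤ)
    (hbm1 : ∀ i, (∃ j < m, L j = i) → bm i = b i - 1)
    (hbm2 : ∀ i, (¬ ∃ j < m, L j = i) → bm i = b i) :
    ∀ p : ι × ι,
      ((a p.1 ≤ bm p.1 ∧ a p.2 ≤ bm p.2 ∧
          SegPrec (a p.1) (bm p.1) (a p.2) (bm p.2)) ∧
        ¬ SegPrec (a p.1) (b p.1) (a p.2) (b p.2)) ↔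
      (∃ j, 1 ≤ j ∧ j < m ∧ p.1 = L j ∧
        (a p.1 ≤ bm p.1 ∧ a p.2 ≤ bm p.2 ∧
          SegPrec (a p.1) (bm p.1) (a p.2) (bm p.2)) ∧
        b (L j) = b p.2) := by
  have key : ∀ i, b i - 1 ≤ bm i ∧ bm i ≤ b i := by
    intro i
    by_cases h : ∃ j < m, L j = i
    · have := hbm1 i h; omega
    · have := hbm2 i h; omega
  intro p
  constructor
  · rintro ⟨⟨h1p, h2p, ha12, ha2, hb12⟩, hnp⟩
    have k1 := key p.1
    have k2 := key p.2
    have hnb : ¬ b p.1 < b p.2 := fun h => hnp ⟨ha12, by omega, h⟩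
    -- p.1 must be a leading index
    by_cases hL1 : ∃ j < m, L j = p.1
    · obtain ⟨j, hj, hLj⟩ := hL1
      have hbm1' := hbm1 p.1 ⟨j, hj, hLj⟩
      have hb2 : b p.2 = b p.1 := by omega
      have hj1 : 1 ≤ j := by
        rcases Nat.eq_zero_or_pos j with h0 | h
        · exfalso
          subst h0
          have hb0 : b p.2 = b (L 0) := by rw [hLj]; exact hb2
          have := h2 p.2 hb0
          rw [hLj] at this
          omega
        · exact h
      exact ⟨j, hj1, hj, hLj.symm, ⟨h1p, h2p, ha12, ha2, hb12⟩, by rw [hLj]; omega⟩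
    · exfalso
      have := hbm2 p.1 hL1
      omega
  · rintro ⟨j, hj1, hjm, hp1, ⟨h1p, h2p, hp⟩, hb⟩
    refine ⟨⟨h1p, h2p, hp⟩, ?_⟩
    rintro ⟨-, -, hlt⟩
    rw [hp1] at hlt
    omega
end

section
/- Let m = Σ_{i∈I} Δ_i, m' = Σ_{i'∈I'} Δ_{i'} be nonzero multisegments over ℤ with max m < max m', and let m'⁻ be obtained from m' by the Mœglin–Waldspurger truncation (removing the last element of each leading segment). Then X_{m,m'⁻} ⊆ X_{m,m'} and Y_{m,m'⁻} ⊆ Y_{m,m'}, where X_{n,n'} = {(i,i') : Δ_i ≺ Δ_{i'}} and Y_{n,n'} = {(i,i') : Δ_i ≺ σΔ_{i'}}. Moreover, writing i'₁,...,i'_{m'} for leading indices of m', the map f : Y_{m,m'} \ Y_{m,m'⁻} → X_{m,m'} \ X_{m,m'⁻} given by (i, i'_{j'}) ↦ (i, i'_{j'−1}) is well-defined and injective. -/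
/-- `X_{m,m'} = {(i,i') : Δ_i ≺ Δ_{i'}}`. -/
def Xpairs {ι ι' : Type} (a b : ι → ℤ) (a' b' : ι' → ℤ) : Set (ι × ι') :=
  {p | SegPrec (a p.1) (b p.1) (a' p.2) (b' p.2)}

/-- `Y_{m,m'} = {(i,i') : Δ_i ≺ σΔ_{i'}}`. -/
def Ypairs {ι ι' : Type} (a b : ι → ℤ) (a' b' : ι' → ℤ) : Set (ι × ι') :=
  {p | SegPrec (a p.1) (b p.1) (a' p.2 + 1) (b' p.2 + 1)}

/-- `X_{m,m'⁻}`, where `bm'` records the (possibly truncated) endpoints of `m'⁻`; a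
segment of `m'⁻` exists only when `a' ≤ bm'`. -/
def XpairsMinus {ι ι' : Type} (a b : ι → ℤ) (a' b' bm' : ι' → ℤ) : Set (ι × ι') :=
  {p | a' p.2 ≤ bm' p.2 ∧ SegPrec (a p.1) (b p.1) (a' p.2) (bm' p.2)}

/-- `Y_{m,m'⁻}`. -/
def YpairsMinus {ι ι' : Type} (a b : ι → ℤ) (a' b' bm' : ι' → ℤ) : Set (ι × ι') :=
  {p | a' p.2 ≤ bm' p.2 ∧ SegPrec (a p.1) (b p.1) (a' p.2 + 1) (bm' p.2 + 1)}

/-- If `max m < max m'` and `m'⁻` is the Mœglin–Waldspurger truncation of `m'` along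
leading indices `L 0, ..., L (M-1)`, then `X_{m,m'⁻} ⊆ X_{m,m'}`, `Y_{m,m'⁻} ⊆ Y_{m,m'}`,
and the map `f : Y_{m,m'} \ Y_{m,m'⁻} → X_{m,m'} \ X_{m,m'⁻}`, `(i, L j) ↦ (i, L (j-1))`,
is well-defined and injective. -/
theorem stmt10 {ι ι' : Type} [Fintype ι] [Fintype ι'] [Nonempty ι]
    (a b : ι → ℤ) (hab : ∀ i, a i ≤ b i)
    (a' b' : ι' → ℤ) (hab' : ∀ i', a' i' ≤ b' i')
    (M : ℕ) (hM : 0 < M) (L : ℕ → ι')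
    (h1 : ∀ i', b' i' ≤ b' (L 0))
    (h2 : ∀ i', b' i' = b' (L 0) → a' i' ≤ a' (L 0))
    (h3 : ∀ j, j + 1 < M →
      SegPrec (a' (L (j + 1))) (b' (L (j + 1))) (a' (L j)) (b' (L j)) ∧
      b' (L (j + 1)) = b' (L j) - 1)
    (h4 : ∀ j, j + 1 < M → ∀ i',
      SegPrec (a' i') (b' i') (a' (L j)) (b' (L j)) → b' i' = b' (L j) - 1 →
        a' i' ≤ a' (L (j + 1)))
    (h5 : ∀ i', ¬(SegPrec (a' i') (b' i') (a' (L (M - 1))) (b' (L (M - 1))) ∧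
      b' i' = b' (L (M - 1)) - 1))
    -- `max m < max m'`
    (hmaxlt : ∀ i, b i < b' (L 0))
    -- `bm'` records the endpoints of the segments of `m'⁻`
    (bm' : ι' → ℤ)
    (hbm1 : ∀ i', (∃ j < M, L j = i') → bm' i' = b' i' - 1)
    (hbm2 : ∀ i', (¬ ∃ j < M, L j = i') → bm' i' = b' i') :
    XpairsMinus a b a' b' bm' ⊆ Xpairs a b a' b' ∧
    YpairsMinus a b a' b' bm' ⊆ Ypairs a b a' b' ∧
    -- well-definedness of `f`
    (∀ p ∈ Ypairs a b a' b' \ YpairsMinus a b a' b' bm',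
      ∃ j, 1 ≤ j ∧ j < M ∧ p.2 = L j ∧
        (p.1, L (j - 1)) ∈ Xpairs a b a' b' \ XpairsMinus a b a' b' bm') ∧
    -- injectivity of `f`
    (∀ p ∈ Ypairs a b a' b' \ YpairsMinus a b a' b' bm',
      ∀ q ∈ Ypairs a b a' b' \ YpairsMinus a b a' b' bm',
        ∀ j k, 1 ≤ j → j < M → 1 ≤ k → k < M → p.2 = L j → q.2 = L k →
          (p.1, L (j - 1)) = (q.1, L (k - 1)) → p = q) := by
  have hbm_le : ∀ i', bm' i' ≤ b' i' := by
    intro i'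
    by_cases h : ∃ j < M, L j = i'
    · have := hbm1 i' h; omega
    · have := hbm2 i' h; omega
  have hchain : ∀ j, j < M → b' (L j) = b' (L 0) - j := by
    intro j
    induction j with
    | zero => intro _; simp
    | succ n ih =>
      intro hj
      have h := (h3 n hj).2
      have h' := ih (Nat.lt_of_succ_lt hj)
      push_cast
      push_cast at h'
      omega
  have key : ∀ p ∈ Ypairs a b a' b' \ YpairsMinus a b a' b' bm',
      (∃ j < M, L j = p.2) ∧ b p.1 = b' p.2 := by
    intro p hp
    obtain ⟨hY, hnY⟩ := hp
    obtain ⟨h1p, h2p, h3p⟩ := hY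
    by_cases hlead : ∃ j < M, L j = p.2
    · refine ⟨hlead, ?_⟩
      have hbm := hbm1 p.2 hlead
      have hab'' := hab' p.2
      simp only [YpairsMinus, Set.mem_setOf_eq, SegPrec, not_and] at hnY
      omega
    · exfalso
      have hbm := hbm2 p.2 hlead
      have hab'' := hab' p.2
      exact hnY ⟨by omega, by omega, by omega, by omega⟩
  refine ⟨?_, ?_, ?_, ?_⟩
  · intro p hp
    obtain ⟨h0, h1p, h2p, h3p⟩ := hp
    have := hbm_le p.2
    exact ⟨h1p, h2p, by omega⟩
  · intro p hp
    obtain ⟨h0, h1p, h2p, h3p⟩ := hp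
    have := hbm_le p.2
    exact ⟨h1p, h2p, by omega⟩
  · intro p hp
    obtain ⟨⟨j, hjM, hjL⟩, hb⟩ := key p hp
    obtain ⟨⟨h1p, h2p, h3p⟩, -⟩ := hp
    have hj1 : 1 ≤ j := by
      rcases Nat.eq_zero_or_pos j with h0 | h
      · exfalso
        have hm := hmaxlt p.1
        subst h0
        rw [← hjL] at hb
        omega
      · exact h
    refine ⟨j, hj1, hjM, hjL.symm, ?_, ?_⟩
    · have hh := h3 (j - 1) (by omega)
      rw [Nat.sub_add_cancel hj1] at hh
      obtain ⟨⟨s1, s2, s3⟩, s4⟩ := hh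
      rw [← hjL] at h1p h2p hb
      simp only [Xpairs, Set.mem_setOf_eq, SegPrec]
      exact ⟨by omega, by omega, by omega⟩
    · intro hX
      simp only [XpairsMinus, Set.mem_setOf_eq, SegPrec] at hX
      obtain ⟨t0, t1, t2, t3⟩ := hX
      have hbm := hbm1 (L (j - 1)) ⟨j - 1, by omega, rfl⟩
      have hh := h3 (j - 1) (by omega)
      rw [Nat.sub_add_cancel hj1] at hh
      rw [← hjL] at hb
      omega
  · intro p hp q hq j k hj1 hjM hk1 hkM hpj hqk heq
    obtain ⟨-, hbp⟩ := key p hp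
    obtain ⟨-, hbq⟩ := key q hq
    have e1 : p.1 = q.1 := (Prod.mk.injEq _ _ _ _ ▸ heq).1
    have c1 := hchain j hjM
    have c2 := hchain k hkM
    rw [hpj] at hbp
    rw [hqk] at hbq
    rw [e1] at hbp
    have : (j : ℤ) = (k : ℤ) := by omega
    have hjk : j = k := by exact_mod_cast this
    have e2 : p.2 = q.2 := by rw [hpj, hqk, hjk]
    exact Prod.ext e1 e2
end

section
/- With notation as in the Mœglin–Waldspurger setup for multisegments m, m' over ℤ with max m < max m', the injective map f_{m,m'} : Y_{m,m'} \ Y_{m,m'⁻} → X_{m,m'} \ X_{m,m'⁻}, (i, i'_{j'}) ↦ (i, i'_{j'−1}), is surjective if and only if (m + m')⁻ = m + m'⁻. In particular, if #(X_{m,m'} \ X_{m,m'⁻}) ≤ #(Y_{m,m'} \ Y_{m,m'⁻}), then (m + m')⁻ = m + m'⁻. -/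
/-- The Mœglin–Waldspurger leading-indices axioms for a multisegment `(a, b)` indexed by
`κ`, with chain `L 0, ..., L (M-1)`. -/
def IsLeadingChain {κ : Type} (a b : κ → ℤ) (M : ℕ) (L : ℕ → κ) : Prop :=
  0 < M ∧
  (∀ i, b i ≤ b (L 0)) ∧
  (∀ i, b i = b (L 0) → a i ≤ a (L 0)) ∧
  (∀ j, j + 1 < M →
    SegPrec (a (L (j + 1))) (b (L (j + 1))) (a (L j)) (b (L j)) ∧
    b (L (j + 1)) = b (L j) - 1) ∧
  (∀ j, j + 1 < M → ∀ i,
    SegPrec (a i) (b i) (a (L j)) (b (L j)) → b i = b (L j) - 1 → a i ≤ a (L (j + 1))) ∧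
  (∀ i, ¬(SegPrec (a i) (b i) (a (L (M - 1))) (b (L (M - 1))) ∧
    b i = b (L (M - 1)) - 1))

/-- The endpoint function of the Mœglin–Waldspurger truncation along `L 0, ..., L (M-1)`. -/
def IsTruncation {κ : Type} (b : κ → ℤ) (M : ℕ) (L : ℕ → κ) (bm : κ → ℤ) : Prop :=
  (∀ i, (∃ j < M, L j = i) → bm i = b i - 1) ∧
  (∀ i, (¬ ∃ j < M, L j = i) → bm i = b i)

namespace MWaux

variable {κ : Type}

lemma chain_b {a b : κ → ℤ} {M : ℕ} {L : ℕ → κ} (hL : IsLeadingChain a b M L) :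
    ∀ j < M, b (L j) = b (L 0) - j := by
  intro j hj
  induction j with
  | zero => simp
  | succ n ih =>
    have hn : n < M := Nat.lt_of_succ_lt hj
    have h := (hL.2.2.2.1 n hj).2
    rw [h, ih hn]
    push_cast; ring

lemma chain_inj {a b : κ → ℤ} {M : ℕ} {L : ℕ → κ} (hL : IsLeadingChain a b M L) :
    ∀ j < M, ∀ j' < M, L j = L j' → j = j' := by
  intro j hj j' hj' he
  have h1 := chain_b hL j hj
  have h2 := chain_b hL j' hj'
  rw [he, h2] at h1
  omega

lemma chain_unique {a b : κ → ℤ} {M M' : ℕ} {L L' : ℕ → κ}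
    (hL : IsLeadingChain a b M L) (hL' : IsLeadingChain a b M' L') :
    ∀ k, (k < M ↔ k < M') ∧ (k < M → a (L k) = a (L' k) ∧ b (L k) = b (L' k)) := by
  intro k
  induction k with
  | zero =>
    refine ⟨⟨fun _ => hL'.1, fun _ => hL.1⟩, fun _ => ⟨?_, ?_⟩⟩
    · have hb : b (L 0) = b (L' 0) := le_antisymm (hL'.2.1 (L 0)) (hL.2.1 (L' 0))
      exact le_antisymm (hL'.2.2.1 (L 0) hb) (hL.2.2.1 (L' 0) hb.symm)
    · exact le_antisymm (hL'.2.1 (L 0)) (hL.2.1 (L' 0))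
  | succ k ih =>
    obtain ⟨hiff, hval⟩ := ih
    by_cases hk : k < M
    · obtain ⟨ha, hb⟩ := hval hk
      have hk' : k < M' := hiff.mp hk
      have step : ∀ (M₁ M₂ : ℕ) (L₁ L₂ : ℕ → κ), IsLeadingChain a b M₁ L₁ →
          IsLeadingChain a b M₂ L₂ → k < M₁ → k < M₂ → a (L₁ k) = a (L₂ k) →
          b (L₁ k) = b (L₂ k) → k + 1 < M₁ → k + 1 < M₂ := by
        intro M₁ M₂ L₁ L₂ h₁ h₂ hk₁ hk₂ ha₁ hb₁ hs
        by_contra hc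
        have hM₂ : M₂ - 1 = k := by omega
        have hcand := (h₁.2.2.2.1 k hs)
        refine h₂.2.2.2.2.2 (L₁ (k+1)) ?_
        rw [hM₂, ← ha₁, ← hb₁]
        exact hcand
      have hstep_iff : (k + 1 < M ↔ k + 1 < M') :=
        ⟨fun h => step M M' L L' hL hL' hk hk' ha hb h,
         fun h => step M' M L' L hL' hL hk' hk ha.symm hb.symm h⟩
      refine ⟨hstep_iff, fun hkM => ?_⟩
      have hkM' : k + 1 < M' := hstep_iff.mp hkM
      have c1 := hL.2.2.2.1 k hkM
      have c2 := hL'.2.2.2.1 k hkM'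
      constructor
      · refine le_antisymm ?_ ?_
        · refine hL'.2.2.2.2.1 k hkM' (L (k+1)) ?_ ?_
          · rw [← ha, ← hb]; exact c1.1
          · rw [← hb]; exact c1.2
        · refine hL.2.2.2.2.1 k hkM (L' (k+1)) ?_ ?_
          · rw [ha, hb]; exact c2.1
          · rw [hb]; exact c2.2
      · rw [c1.2, c2.2, hb]
    · have hk' : ¬ k < M' := fun h => hk (hiff.mpr h)
      exact ⟨⟨fun h => absurd (by omega : k < M) hk, fun h => absurd (by omega : k < M') hk'⟩,
        fun h => absurd (by omega : k < M) hk⟩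

lemma sum_decomp [Fintype κ] {a b : κ → ℤ} (hab : ∀ i, a i ≤ b i) {M : ℕ} {L : ℕ → κ}
    (hinj : ∀ j < M, ∀ j' < M, L j = L j' → j = j')
    {bm : κ → ℤ} (hbm : IsTruncation b M L bm) :
    (∑ x : κ, if a x ≤ bm x then ({(a x, bm x)} : Multiset (ℤ × ℤ)) else 0)
      + ∑ j ∈ Finset.range M, ({(a (L j), b (L j))} : Multiset (ℤ × ℤ))
    = (∑ x : κ, ({(a x, b x)} : Multiset (ℤ × ℤ)))
      + ∑ j ∈ Finset.range M, (if a (L j) ≤ b (L j) - 1 then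
          ({(a (L j), b (L j) - 1)} : Multiset (ℤ × ℤ)) else 0) := by
  classical
  set F : κ → Multiset (ℤ × ℤ) := fun x => if a x ≤ bm x then {(a x, bm x)} else 0 with hF
  set G : κ → Multiset (ℤ × ℤ) := fun x => {(a x, b x)} with hG
  set R : Finset κ := (Finset.range M).image L with hR
  have hmemR : ∀ x, x ∈ R ↔ ∃ j < M, L j = x := by
    intro x; simp [hR, Finset.mem_image, Finset.mem_range]
  have hFoff : ∀ x ∉ R, F x = G x := by
    intro x hx
    have hb : bm x = b x := hbm.2 x (by rw [← hmemR]; exact hx)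
    simp [hF, hG, hb, hab x]
  have hsplit : ∀ (H : κ → Multiset (ℤ × ℤ)),
      ∑ x : κ, H x = ∑ x ∈ R, H x + ∑ x ∈ Rᶜ, H x := by
    intro H
    rw [Finset.sum_add_sum_compl]
  have himg : ∀ (H : κ → Multiset (ℤ × ℤ)),
      ∑ x ∈ R, H x = ∑ j ∈ Finset.range M, H (L j) := by
    intro H
    rw [hR, Finset.sum_image]
    intro j hj j' hj' he
    exact hinj j (Finset.mem_range.mp hj) j' (Finset.mem_range.mp hj') he
  have hFL : ∀ j < M, F (L j) = if a (L j) ≤ b (L j) - 1 then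
      ({(a (L j), b (L j) - 1)} : Multiset (ℤ × ℤ)) else 0 := by
    intro j hj
    have hb : bm (L j) = b (L j) - 1 := hbm.1 (L j) ⟨j, hj, rfl⟩
    simp [hF, hb]
  rw [hsplit F, hsplit G, himg F, himg G]
  have h1 : ∑ j ∈ Finset.range M, F (L j) = ∑ j ∈ Finset.range M, (if a (L j) ≤ b (L j) - 1 then
      ({(a (L j), b (L j) - 1)} : Multiset (ℤ × ℤ)) else 0) :=
    Finset.sum_congr rfl fun j hj => hFL j (Finset.mem_range.mp hj)
  have h2 : ∑ x ∈ Rᶜ, F x = ∑ x ∈ Rᶜ, G x :=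
    Finset.sum_congr rfl fun x hx => hFoff x (by simpa using hx)
  rw [h1, h2]
  have h3 : ∀ j ∈ Finset.range M, G (L j) = ({(a (L j), b (L j))} : Multiset (ℤ × ℤ)) :=
    fun j _ => rfl
  rw [Finset.sum_congr rfl h3]
  abel

lemma count_sum_ite {n : ℕ} (g : ℕ → ℤ × ℤ) (cond : ℕ → Prop) [DecidablePred cond]
    (z : ℤ × ℤ) (k : ℕ) (hz : ∀ j < n, g j = z → j = k) :
    Multiset.count z (∑ j ∈ Finset.range n, if cond j then ({g j} : Multiset (ℤ × ℤ)) else 0)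
    = if k < n ∧ cond k ∧ g k = z then 1 else 0 := by
  classical
  rw [Multiset.count_sum']
  by_cases hk : k < n ∧ cond k ∧ g k = z
  · obtain ⟨hkn, hck, hgz⟩ := hk
    rw [if_pos ⟨hkn, hck, hgz⟩,
      Finset.sum_eq_single_of_mem k (Finset.mem_range.mpr hkn)]
    · rw [if_pos hck, hgz, Multiset.count_singleton_self]
    · intro j hj hne
      rw [Finset.mem_range] at hj
      split
      · rw [Multiset.count_singleton, if_neg]
        intro h
        exact hne (hz j hj h.symm)
      · simp
  · rw [if_neg hk]
    apply Finset.sum_eq_zero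
    intro j hj
    rw [Finset.mem_range] at hj
    split
    · rename_i hc
      rw [Multiset.count_singleton, if_neg]
      intro h
      have hjk := hz j hj h.symm
      subst hjk
      exact hk ⟨hj, hc, h.symm⟩
    · simp

lemma count_sum_singleton {n : ℕ} (g : ℕ → ℤ × ℤ) (z : ℤ × ℤ) (k : ℕ)
    (hz : ∀ j < n, g j = z → j = k) :
    Multiset.count z (∑ j ∈ Finset.range n, ({g j} : Multiset (ℤ × ℤ)))
    = if k < n ∧ g k = z then 1 else 0 := by
  classical
  have h := count_sum_ite g (fun _ => True) z k hz
  simpa using h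

lemma juggle {α : Type*} [AddCancelCommMonoid α]
    {SF U1 T Su SG SF' V1 SG' Sv : α}
    (D1 : SF + U1 = T + Su) (D2 : SF' + V1 = SG' + Sv) (hsplit : T = SG + SG') :
    (SF = SG + SF') ↔ (Su + V1 = Sv + U1) := by
  constructor
  · intro h
    have e : T + (Sv + U1) = T + (Su + V1) := by
      calc T + (Sv + U1) = SG + (SG' + Sv) + U1 := by rw [hsplit]; abel
      _ = SG + (SF' + V1) + U1 := by rw [D2]
      _ = (SG + SF') + U1 + V1 := by abel
      _ = SF + U1 + V1 := by rw [h]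
      _ = (T + Su) + V1 := by rw [D1]
      _ = T + (Su + V1) := by abel
    exact (add_left_cancel e).symm
  · intro h
    have e : (U1 + V1) + SF = (U1 + V1) + (SG + SF') := by
      calc (U1 + V1) + SF = (SF + U1) + V1 := by abel
      _ = (T + Su) + V1 := by rw [D1]
      _ = T + (Su + V1) := by abel
      _ = T + (Sv + U1) := by rw [h]
      _ = SG + (SG' + Sv) + U1 := by rw [hsplit]; abel
      _ = SG + (SF' + V1) + U1 := by rw [D2]
      _ = (U1 + V1) + (SG + SF') := by abel
    exact add_left_cancel e

end MWaux

/-- With `max m < max m'`, the injection `f_{m,m'} : Y_{m,m'}∖Y_{m,m'⁻} → X_{m,m'}∖X_{m,m'⁻}`,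
`(i, L j) ↦ (i, L (j-1))`, is surjective iff `(m + m')⁻ = m + m'⁻` (as multisets of
segments); in particular `#(X∖X⁻) ≤ #(Y∖Y⁻)` implies `(m + m')⁻ = m + m'⁻`. -/
theorem stmt11 {ι ι' : Type} [Fintype ι] [Fintype ι'] [Nonempty ι]
    (a b : ι → ℤ) (hab : ∀ i, a i ≤ b i)
    (a' b' : ι' → ℤ) (hab' : ∀ i', a' i' ≤ b' i')
    -- leading indices and truncation of `m'`
    (M : ℕ) (L : ℕ → ι') (hL : IsLeadingChain a' b' M L)
    (bm' : ι' → ℤ) (hbm' : IsTruncation b' M L bm')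
    -- `max m < max m'`
    (hmaxlt : ∀ i, b i < b' (L 0))
    -- leading indices and truncation of `m + m'`
    (M₂ : ℕ) (LL : ℕ → ι ⊕ ι')
    (hLL : IsLeadingChain (Sum.elim a a') (Sum.elim b b') M₂ LL)
    (bCm : ι ⊕ ι' → ℤ) (hbCm : IsTruncation (Sum.elim b b') M₂ LL bCm) :
    -- surjectivity of `f_{m,m'}` iff `(m + m')⁻ = m + m'⁻`
    ((∀ q ∈ Xpairs a b a' b' \ XpairsMinus a b a' b' bm',
        ∃ p ∈ Ypairs a b a' b' \ YpairsMinus a b a' b' bm',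
          ∃ j, 1 ≤ j ∧ j < M ∧ p.2 = L j ∧ q = (p.1, L (j - 1))) ↔
      ((∑ x : ι ⊕ ι', if Sum.elim a a' x ≤ bCm x then
          ({(Sum.elim a a' x, bCm x)} : Multiset (ℤ × ℤ)) else 0) =
        (∑ i : ι, ({(a i, b i)} : Multiset (ℤ × ℤ))) +
          ∑ i' : ι', if a' i' ≤ bm' i' then ({(a' i', bm' i')} : Multiset (ℤ × ℤ)) else 0)) ∧
    ((Xpairs a b a' b' \ XpairsMinus a b a' b' bm').ncard ≤
        (Ypairs a b a' b' \ YpairsMinus a b a' b' bm').ncard →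
      ((∑ x : ι ⊕ ι', if Sum.elim a a' x ≤ bCm x then
          ({(Sum.elim a a' x, bCm x)} : Multiset (ℤ × ℤ)) else 0) =
        (∑ i : ι, ({(a i, b i)} : Multiset (ℤ × ℤ))) +
          ∑ i' : ι', if a' i' ≤ bm' i' then ({(a' i', bm' i')} : Multiset (ℤ × ℤ)) else 0)) := by
  classical
  -- basic facts about the m' chain
  have hb'L : ∀ j < M, b' (L j) = b' (L 0) - j := MWaux.chain_b hL
  have hLinj : ∀ j < M, ∀ j' < M, L j = L j' → j = j' := MWaux.chain_inj hL
  have hbm'L : ∀ j < M, bm' (L j) = b' (L j) - 1 := fun j hj => hbm'.1 (L j) ⟨j, hj, rfl⟩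
  -- basic facts about the m + m' chain
  have habS : ∀ x : ι ⊕ ι', Sum.elim a a' x ≤ Sum.elim b b' x := by
    intro x; cases x with
    | inl i => exact hab i
    | inr i' => exact hab' i'
  have hBL : ∀ j < M₂, Sum.elim b b' (LL j) = Sum.elim b b' (LL 0) - j := MWaux.chain_b hLL
  have hLLinj : ∀ j < M₂, ∀ j' < M₂, LL j = LL j' → j = j' := MWaux.chain_inj hLL
  have htopB : Sum.elim b b' (LL 0) = b' (L 0) := by
    refine le_antisymm ?_ (by simpa using hLL.2.1 (Sum.inr (L 0)))
    cases hLL0 : LL 0 with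
    | inl i => simpa using (hmaxlt i).le
    | inr i' => simpa using hL.2.1 i'
  have htopA : Sum.elim a a' (LL 0) = a' (L 0) := by
    refine le_antisymm ?_ ?_
    · cases hLL0 : LL 0 with
      | inl i =>
        exfalso
        have h1 : b i < b' (L 0) := hmaxlt i
        rw [hLL0] at htopB
        simp only [Sum.elim_inl] at htopB
        omega
      | inr i' =>
        rw [hLL0] at htopB
        simp only [Sum.elim_inr] at htopB ⊢
        exact hL.2.2.1 i' htopB
    · have := hLL.2.2.1 (Sum.inr (L 0)) (by simpa using htopB.symm)
      simpa using this
  -- membership characterizations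
  have hXmem : ∀ i i', ((i, i') ∈ Xpairs a b a' b' \ XpairsMinus a b a' b' bm') ↔
      ∃ j < M, L j = i' ∧ a i < a' i' ∧ a' i' ≤ b i + 1 ∧ b i = b' i' - 1 := by
    intro i i'
    simp only [Set.mem_diff, Xpairs, XpairsMinus, Set.mem_setOf_eq, SegPrec]
    constructor
    · rintro ⟨⟨h1, h2, h3⟩, hnX⟩
      by_cases hch : ∃ j < M, L j = i'
      · obtain ⟨j, hj, hji⟩ := hch
        have hbm : bm' i' = b' i' - 1 := hji ▸ hbm'L j hj
        rw [hbm] at hnX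
        have h4 := hab' i'
        exact ⟨j, hj, hji, h1, h2, by omega⟩
      · have hbm : bm' i' = b' i' := hbm'.2 i' hch
        rw [hbm] at hnX
        exact absurd ⟨hab' i', h1, h2, h3⟩ hnX
    · rintro ⟨j, hj, hji, h1, h2, h3⟩
      have hbm : bm' i' = b' i' - 1 := hji ▸ hbm'L j hj
      rw [hbm]
      exact ⟨⟨h1, h2, by omega⟩, by omega⟩
  have hYmem : ∀ i i', ((i, i') ∈ Ypairs a b a' b' \ YpairsMinus a b a' b' bm') ↔
      ∃ j, 1 ≤ j ∧ j < M ∧ L j = i' ∧ a i ≤ a' i' ∧ a' i' ≤ b i ∧ b i = b' i' := by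
    intro i i'
    simp only [Set.mem_diff, Ypairs, YpairsMinus, Set.mem_setOf_eq, SegPrec]
    constructor
    · rintro ⟨⟨h1, h2, h3⟩, hnY⟩
      by_cases hch : ∃ j < M, L j = i'
      · obtain ⟨j, hj, hji⟩ := hch
        have hbm : bm' i' = b' i' - 1 := hji ▸ hbm'L j hj
        rw [hbm] at hnY
        have h4 := hab' i'
        have hbe : b i = b' i' := by omega
        have hj1 : 1 ≤ j := by
          rcases Nat.eq_zero_or_pos j with h | h
          · subst h
            have h5 := hmaxlt i
            rw [hji] at h5
            omega
          · exact h
        exact ⟨j, hj1, hj, hji, by omega, by omega, hbe⟩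
      · have hbm : bm' i' = b' i' := hbm'.2 i' hch
        rw [hbm] at hnY
        exact absurd ⟨hab' i', h1, h2, h3⟩ hnY
    · rintro ⟨j, hj1, hj, hji, h1, h2, h3⟩
      have hbm : bm' i' = b' i' - 1 := hji ▸ hbm'L j hj
      rw [hbm]
      exact ⟨⟨by omega, by omega, by omega⟩, by omega⟩
  -- the combinatorial condition S
  have hS_to_chain : (∀ j' < M, ∀ i, SegPrec (a i) (b i) (a' (L j')) (b' (L j')) →
        b i = b' (L j') - 1 → j' + 1 < M ∧ a i ≤ a' (L (j' + 1))) →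
      (∀ k, (k < M ↔ k < M₂) ∧ (k < M → Sum.elim a a' (LL k) = a' (L k))) := by
    intro hS
    have hC : IsLeadingChain (Sum.elim a a') (Sum.elim b b') M (fun j => Sum.inr (L j)) := by
      refine ⟨hL.1, ?_, ?_, ?_, ?_, ?_⟩
      · intro x; cases x with
        | inl i => exact (hmaxlt i).le
        | inr i' => exact hL.2.1 i'
      · intro x hx; cases x with
        | inl i => exact absurd hx (hmaxlt i).ne
        | inr i' => exact hL.2.2.1 i' hx
      · intro j hj; exact hL.2.2.2.1 j hj
      · intro j hj x hseg hbx
        cases x with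
        | inl i => exact (hS j (by omega) i hseg hbx).2
        | inr i' => exact hL.2.2.2.2.1 j hj i' hseg hbx
      · intro x
        cases x with
        | inl i =>
          rintro ⟨hseg, hbx⟩
          have h0 := hL.1
          have := (hS (M - 1) (Nat.sub_lt hL.1 Nat.one_pos) i hseg hbx).1
          omega
        | inr i' => exact hL.2.2.2.2.2 i'
    have hu := MWaux.chain_unique hLL hC
    intro k
    exact ⟨⟨fun h => ((hu k).1).mpr h, fun h => ((hu k).1).mp h⟩,
      fun h => ((hu k).2 (((hu k).1).mpr h)).1⟩
  have hchain_to_S : (∀ k, (k < M ↔ k < M₂) ∧ (k < M → Sum.elim a a' (LL k) = a' (L k))) →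
      (∀ j' < M, ∀ i, SegPrec (a i) (b i) (a' (L j')) (b' (L j')) →
        b i = b' (L j') - 1 → j' + 1 < M ∧ a i ≤ a' (L (j' + 1))) := by
    intro hc
    have hMM : M = M₂ := by
      have h1 := (hc M).1
      have h2 := (hc M₂).1
      omega
    intro j' hj' i hseg hb0
    have hj2 : j' < M₂ := by omega
    have hαj : Sum.elim a a' (LL j') = a' (L j') := (hc j').2 hj'
    have hβj : Sum.elim b b' (LL j') = b' (L j') := by
      rw [hBL j' hj2, htopB, hb'L j' hj']
    have hcand : SegPrec (Sum.elim a a' (Sum.inl i)) (Sum.elim b b' (Sum.inl i))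
        (Sum.elim a a' (LL j')) (Sum.elim b b' (LL j')) := by
      rw [hαj, hβj]; exact hseg
    have hcb : Sum.elim b b' (Sum.inl i) = Sum.elim b b' (LL j') - 1 := by
      rw [hβj]; exact hb0
    have hlt : j' + 1 < M₂ := by
      rcases Nat.lt_or_ge (j' + 1) M₂ with h | h
      · exact h
      · exfalso
        have hM1 : M₂ - 1 = j' := by omega
        exact hLL.2.2.2.2.2 (Sum.inl i) (by rw [hM1]; exact ⟨hcand, hcb⟩)
    refine ⟨by omega, ?_⟩
    have h5 := hLL.2.2.2.2.1 j' hlt (Sum.inl i) hcand hcb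
    rw [(hc (j' + 1)).2 (by omega)] at h5
    exact h5
  -- decomposition of the truncated sums
  have hD1 := MWaux.sum_decomp habS hLLinj hbCm
  have hD2 := MWaux.sum_decomp hab' hLinj hbm'
  have hsplitG : (∑ x : ι ⊕ ι', ({(Sum.elim a a' x, Sum.elim b b' x)} : Multiset (ℤ × ℤ)))
      = (∑ i : ι, ({(a i, b i)} : Multiset (ℤ × ℤ)))
        + ∑ i' : ι', ({(a' i', b' i')} : Multiset (ℤ × ℤ)) := by
    rw [Fintype.sum_sum_type]
    rfl
  have hMEq_iff_E : ((∑ x : ι ⊕ ι', if Sum.elim a a' x ≤ bCm x then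
          ({(Sum.elim a a' x, bCm x)} : Multiset (ℤ × ℤ)) else 0) =
        (∑ i : ι, ({(a i, b i)} : Multiset (ℤ × ℤ))) +
          ∑ i' : ι', if a' i' ≤ bm' i' then ({(a' i', bm' i')} : Multiset (ℤ × ℤ)) else 0) ↔
      ((∑ j ∈ Finset.range M₂, if Sum.elim a a' (LL j) ≤ Sum.elim b b' (LL j) - 1 then
          ({(Sum.elim a a' (LL j), Sum.elim b b' (LL j) - 1)} : Multiset (ℤ × ℤ)) else 0)
        + ∑ j ∈ Finset.range M, ({(a' (L j), b' (L j))} : Multiset (ℤ × ℤ))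
      = (∑ j ∈ Finset.range M, if a' (L j) ≤ b' (L j) - 1 then
          ({(a' (L j), b' (L j) - 1)} : Multiset (ℤ × ℤ)) else 0)
        + ∑ j ∈ Finset.range M₂,
            ({(Sum.elim a a' (LL j), Sum.elim b b' (LL j))} : Multiset (ℤ × ℤ))) :=
    MWaux.juggle hD1 hD2 hsplitG
  -- E implies chain agreement
  have hE_to_chain : ((∑ j ∈ Finset.range M₂, if Sum.elim a a' (LL j) ≤ Sum.elim b b' (LL j) - 1 then
          ({(Sum.elim a a' (LL j), Sum.elim b b' (LL j) - 1)} : Multiset (ℤ × ℤ)) else 0)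
        + ∑ j ∈ Finset.range M, ({(a' (L j), b' (L j))} : Multiset (ℤ × ℤ))
      = (∑ j ∈ Finset.range M, if a' (L j) ≤ b' (L j) - 1 then
          ({(a' (L j), b' (L j) - 1)} : Multiset (ℤ × ℤ)) else 0)
        + ∑ j ∈ Finset.range M₂,
            ({(Sum.elim a a' (LL j), Sum.elim b b' (LL j))} : Multiset (ℤ × ℤ))) →
      (∀ k, (k < M ↔ k < M₂) ∧ (k < M → Sum.elim a a' (LL k) = a' (L k))) := by
    intro hE k
    induction k with
    | zero => exact ⟨⟨fun _ => hLL.1, fun _ => hL.1⟩, fun _ => htopA⟩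
    | succ k ih =>
      obtain ⟨hiff, hval⟩ := ih
      by_cases hk : k < M
      · have hk2 : k < M₂ := hiff.mp hk
        have hα : Sum.elim a a' (LL k) = a' (L k) := hval hk
        have hBk : Sum.elim b b' (LL k) = b' (L 0) - k := by rw [hBL k hk2, htopB]
        have hcnt : ∀ y : ℤ, (if k + 1 < M ∧ a' (L (k + 1)) = y then (1 : ℕ) else 0) =
            (if k + 1 < M₂ ∧ Sum.elim a a' (LL (k + 1)) = y then 1 else 0) := by
          intro y
          have cSu : Multiset.count (y, b' (L 0) - ((k : ℤ) + 1))
              (∑ j ∈ Finset.range M₂, if Sum.elim a a' (LL j) ≤ Sum.elim b b' (LL j) - 1 then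
                ({(Sum.elim a a' (LL j), Sum.elim b b' (LL j) - 1)} : Multiset (ℤ × ℤ)) else 0)
              = if Sum.elim a a' (LL k) ≤ b' (L 0) - ((k : ℤ) + 1) ∧ Sum.elim a a' (LL k) = y
                then 1 else 0 := by
            have hz : ∀ j < M₂, (Sum.elim a a' (LL j), Sum.elim b b' (LL j) - 1)
                = (y, b' (L 0) - ((k : ℤ) + 1)) → j = k := by
              intro j hj hje
              rw [Prod.mk.injEq] at hje
              have hBj : Sum.elim b b' (LL j) = b' (L 0) - j := by rw [hBL j hj, htopB]
              omega
            have h0 := MWaux.count_sum_ite (n := M₂)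
              (fun j => (Sum.elim a a' (LL j), Sum.elim b b' (LL j) - 1))
              (fun j => Sum.elim a a' (LL j) ≤ Sum.elim b b' (LL j) - 1)
              (y, b' (L 0) - ((k : ℤ) + 1)) k hz
            refine h0.trans ?_
            refine if_congr ?_ rfl rfl
            show (k < M₂ ∧ Sum.elim a a' (LL k) ≤ Sum.elim b b' (LL k) - 1 ∧
                (Sum.elim a a' (LL k), Sum.elim b b' (LL k) - 1)
                  = (y, b' (L 0) - ((k : ℤ) + 1))) ↔ _
            rw [Prod.mk.injEq]
            constructor
            · rintro ⟨h1, h2, h3, h4⟩; exact ⟨by omega, h3⟩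
            · rintro ⟨h1, h2⟩; exact ⟨hk2, by omega, h2, by omega⟩
          have cSv : Multiset.count (y, b' (L 0) - ((k : ℤ) + 1))
              (∑ j ∈ Finset.range M, if a' (L j) ≤ b' (L j) - 1 then
                ({(a' (L j), b' (L j) - 1)} : Multiset (ℤ × ℤ)) else 0)
              = if a' (L k) ≤ b' (L 0) - ((k : ℤ) + 1) ∧ a' (L k) = y then 1 else 0 := by
            have hz : ∀ j < M, (a' (L j), b' (L j) - 1)
                = (y, b' (L 0) - ((k : ℤ) + 1)) → j = k := by
              intro j hj hje
              rw [Prod.mk.injEq] at hje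
              have hBj := hb'L j hj
              omega
            have h0 := MWaux.count_sum_ite (n := M)
              (fun j => (a' (L j), b' (L j) - 1))
              (fun j => a' (L j) ≤ b' (L j) - 1)
              (y, b' (L 0) - ((k : ℤ) + 1)) k hz
            refine h0.trans ?_
            refine if_congr ?_ rfl rfl
            show (k < M ∧ a' (L k) ≤ b' (L k) - 1 ∧
                (a' (L k), b' (L k) - 1) = (y, b' (L 0) - ((k : ℤ) + 1))) ↔ _
            rw [Prod.mk.injEq]
            have hBj := hb'L k hk
            constructor
            · rintro ⟨h1, h2, h3, h4⟩; exact ⟨by omega, h3⟩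
            · rintro ⟨h1, h2⟩; exact ⟨hk, by omega, h2, by omega⟩
          have cU1 : Multiset.count (y, b' (L 0) - ((k : ℤ) + 1))
              (∑ j ∈ Finset.range M₂,
                ({(Sum.elim a a' (LL j), Sum.elim b b' (LL j))} : Multiset (ℤ × ℤ)))
              = if k + 1 < M₂ ∧ Sum.elim a a' (LL (k + 1)) = y then 1 else 0 := by
            have hz : ∀ j < M₂, (Sum.elim a a' (LL j), Sum.elim b b' (LL j))
                = (y, b' (L 0) - ((k : ℤ) + 1)) → j = k + 1 := by
              intro j hj hje
              rw [Prod.mk.injEq] at hje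
              have hBj : Sum.elim b b' (LL j) = b' (L 0) - j := by rw [hBL j hj, htopB]
              omega
            have h0 := MWaux.count_sum_singleton (n := M₂)
              (fun j => (Sum.elim a a' (LL j), Sum.elim b b' (LL j)))
              (y, b' (L 0) - ((k : ℤ) + 1)) (k + 1) hz
            refine h0.trans ?_
            refine if_congr ?_ rfl rfl
            show (k + 1 < M₂ ∧ (Sum.elim a a' (LL (k + 1)), Sum.elim b b' (LL (k + 1)))
                = (y, b' (L 0) - ((k : ℤ) + 1))) ↔ _
            rw [Prod.mk.injEq]
            constructor
            · rintro ⟨h1, h2, h3⟩; exact ⟨h1, h2⟩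
            · rintro ⟨h1, h2⟩
              have hBj : Sum.elim b b' (LL (k + 1)) = b' (L 0) - (k + 1 : ℕ) := by
                rw [hBL (k + 1) h1, htopB]
              exact ⟨h1, h2, by omega⟩
          have cV1 : Multiset.count (y, b' (L 0) - ((k : ℤ) + 1))
              (∑ j ∈ Finset.range M, ({(a' (L j), b' (L j))} : Multiset (ℤ × ℤ)))
              = if k + 1 < M ∧ a' (L (k + 1)) = y then 1 else 0 := by
            have hz : ∀ j < M, (a' (L j), b' (L j))
                = (y, b' (L 0) - ((k : ℤ) + 1)) → j = k + 1 := by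
              intro j hj hje
              rw [Prod.mk.injEq] at hje
              have hBj := hb'L j hj
              omega
            have h0 := MWaux.count_sum_singleton (n := M)
              (fun j => (a' (L j), b' (L j)))
              (y, b' (L 0) - ((k : ℤ) + 1)) (k + 1) hz
            refine h0.trans ?_
            refine if_congr ?_ rfl rfl
            show (k + 1 < M ∧ (a' (L (k + 1)), b' (L (k + 1)))
                = (y, b' (L 0) - ((k : ℤ) + 1))) ↔ _
            rw [Prod.mk.injEq]
            constructor
            · rintro ⟨h1, h2, h3⟩; exact ⟨h1, h2⟩
            · rintro ⟨h1, h2⟩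
              have hBj := hb'L (k + 1) h1
              exact ⟨h1, h2, by omega⟩
          have hcE := congrArg (Multiset.count (y, b' (L 0) - ((k : ℤ) + 1))) hE
          rw [Multiset.count_add, Multiset.count_add, cSu, cSv, cU1, cV1, hα] at hcE
          exact add_left_cancel hcE
        have hcnt' : ∀ y : ℤ, ((k + 1 < M ∧ a' (L (k + 1)) = y) ↔
            (k + 1 < M₂ ∧ Sum.elim a a' (LL (k + 1)) = y)) := by
          intro y
          have h1 := hcnt y
          constructor
          · intro h
            by_contra hc
            rw [if_pos h, if_neg hc] at h1
            exact one_ne_zero h1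
          · intro h
            by_contra hc
            rw [if_pos h, if_neg hc] at h1
            exact zero_ne_one h1
        refine ⟨⟨fun h => ((hcnt' (a' (L (k + 1)))).mp ⟨h, rfl⟩).1,
          fun h => ((hcnt' (Sum.elim a a' (LL (k + 1)))).mpr ⟨h, rfl⟩).1⟩, fun h => ?_⟩
        exact ((hcnt' (a' (L (k + 1)))).mp ⟨h, rfl⟩).2
      · have hk2 : ¬ k < M₂ := fun h => hk (hiff.mpr h)
        exact ⟨⟨fun h => absurd (by omega : k < M) hk, fun h => absurd (by omega : k < M₂) hk2⟩,
          fun h => absurd (by omega : k < M) hk⟩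
  -- chain agreement implies E
  have hchain_to_E : (∀ k, (k < M ↔ k < M₂) ∧ (k < M → Sum.elim a a' (LL k) = a' (L k))) →
      ((∑ j ∈ Finset.range M₂, if Sum.elim a a' (LL j) ≤ Sum.elim b b' (LL j) - 1 then
          ({(Sum.elim a a' (LL j), Sum.elim b b' (LL j) - 1)} : Multiset (ℤ × ℤ)) else 0)
        + ∑ j ∈ Finset.range M, ({(a' (L j), b' (L j))} : Multiset (ℤ × ℤ))
      = (∑ j ∈ Finset.range M, if a' (L j) ≤ b' (L j) - 1 then
          ({(a' (L j), b' (L j) - 1)} : Multiset (ℤ × ℤ)) else 0)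
        + ∑ j ∈ Finset.range M₂,
            ({(Sum.elim a a' (LL j), Sum.elim b b' (LL j))} : Multiset (ℤ × ℤ))) := by
    intro hc
    have hMM : M₂ = M := by
      have h1 := (hc M).1
      have h2 := (hc M₂).1
      omega
    have hterm : ∀ j < M, Sum.elim a a' (LL j) = a' (L j)
        ∧ Sum.elim b b' (LL j) = b' (L j) := by
      intro j hj
      refine ⟨(hc j).2 hj, ?_⟩
      rw [hBL j (by omega), htopB, hb'L j hj]
    have h1 : (∑ j ∈ Finset.range M₂,
        if Sum.elim a a' (LL j) ≤ Sum.elim b b' (LL j) - 1 then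
          ({(Sum.elim a a' (LL j), Sum.elim b b' (LL j) - 1)} : Multiset (ℤ × ℤ)) else 0)
        = ∑ j ∈ Finset.range M, if a' (L j) ≤ b' (L j) - 1 then
          ({(a' (L j), b' (L j) - 1)} : Multiset (ℤ × ℤ)) else 0 := by
      rw [hMM]
      refine Finset.sum_congr rfl fun j hj => ?_
      rw [Finset.mem_range] at hj
      rw [(hterm j hj).1, (hterm j hj).2]
    have h2 : (∑ j ∈ Finset.range M₂,
        ({(Sum.elim a a' (LL j), Sum.elim b b' (LL j))} : Multiset (ℤ × ℤ)))
        = ∑ j ∈ Finset.range M, ({(a' (L j), b' (L j))} : Multiset (ℤ × ℤ)) := by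
      rw [hMM]
      refine Finset.sum_congr rfl fun j hj => ?_
      rw [Finset.mem_range] at hj
      rw [(hterm j hj).1, (hterm j hj).2]
    rw [h1, h2, add_comm]
  -- the iff between surjectivity and S
  have hSurj_iff_S : (∀ q ∈ Xpairs a b a' b' \ XpairsMinus a b a' b' bm',
        ∃ p ∈ Ypairs a b a' b' \ YpairsMinus a b a' b' bm',
          ∃ j, 1 ≤ j ∧ j < M ∧ p.2 = L j ∧ q = (p.1, L (j - 1))) ↔
      (∀ j' < M, ∀ i, SegPrec (a i) (b i) (a' (L j')) (b' (L j')) →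
        b i = b' (L j') - 1 → j' + 1 < M ∧ a i ≤ a' (L (j' + 1))) := by
    constructor
    · intro hs j' hj' i hseg hbi
      have hq : (i, L j') ∈ Xpairs a b a' b' \ XpairsMinus a b a' b' bm' :=
        (hXmem i (L j')).mpr ⟨j', hj', rfl, hseg.1, hseg.2.1, hbi⟩
      obtain ⟨p, hp, j, h1j, hjM, hpL, hql⟩ := hs _ hq
      rw [Prod.mk.injEq] at hql
      obtain ⟨hq1, hq2⟩ := hql
      have hjj : j' = j - 1 := hLinj j' hj' (j - 1) (by omega) hq2
      have hjeq : j = j' + 1 := by omega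
      refine ⟨by omega, ?_⟩
      have hY := hp.1
      simp only [Ypairs, Set.mem_setOf_eq, SegPrec] at hY
      rw [hpL, hjeq] at hY
      rw [hq1]
      omega
    · intro hS q hq
      obtain ⟨i, i'⟩ := q
      obtain ⟨j', hj', hLj, h1, h2, h3⟩ := (hXmem i i').mp hq
      subst hLj
      obtain ⟨hj1, hj2⟩ := hS j' hj' i ⟨h1, h2, by omega⟩ h3
      have hb1 := hb'L (j' + 1) hj1
      have hb0 := hb'L j' hj'
      have hba := hab' (L (j' + 1))
      refine ⟨(i, L (j' + 1)), ?_, j' + 1, by omega, hj1, rfl, ?_⟩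
      · exact (hYmem i (L (j' + 1))).mpr
          ⟨j' + 1, by omega, hj1, rfl, hj2, by omega, by omega⟩
      · simp
  -- the main iff
  have hmain : (∀ q ∈ Xpairs a b a' b' \ XpairsMinus a b a' b' bm',
        ∃ p ∈ Ypairs a b a' b' \ YpairsMinus a b a' b' bm',
          ∃ j, 1 ≤ j ∧ j < M ∧ p.2 = L j ∧ q = (p.1, L (j - 1))) ↔
      ((∑ x : ι ⊕ ι', if Sum.elim a a' x ≤ bCm x then
          ({(Sum.elim a a' x, bCm x)} : Multiset (ℤ × ℤ)) else 0) =
        (∑ i : ι, ({(a i, b i)} : Multiset (ℤ × ℤ))) +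
          ∑ i' : ι', if a' i' ≤ bm' i' then ({(a' i', bm' i')} : Multiset (ℤ × ℤ)) else 0) := by
    constructor
    · intro h
      exact hMEq_iff_E.mpr (hchain_to_E (hS_to_chain (hSurj_iff_S.mp h)))
    · intro h
      exact hSurj_iff_S.mpr (hchain_to_S (hE_to_chain (hMEq_iff_E.mp h)))
  refine ⟨hmain, fun hcard => ?_⟩
  -- the injection argument
  have hex : ∀ p ∈ Ypairs a b a' b' \ YpairsMinus a b a' b' bm',
      ∃ j, 1 ≤ j ∧ j < M ∧ L j = p.2 ∧ a p.1 ≤ a' p.2 ∧ a' p.2 ≤ b p.1 ∧ b p.1 = b' p.2 :=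
    fun p hp => (hYmem p.1 p.2).mp hp
  choose! jfun hj1 hj2 hj3 hj4 hj5 hj6 using hex
  set g : ι × ι' → ι × ι' := fun p => (p.1, L (jfun p - 1)) with hg
  have hgt : ∀ p ∈ Ypairs a b a' b' \ YpairsMinus a b a' b' bm',
      g p ∈ Xpairs a b a' b' \ XpairsMinus a b a' b' bm' := by
    intro p hp
    have h1 := hj1 p hp
    have h2 := hj2 p hp
    have e3 := hj3 p hp
    have e4 := hj4 p hp
    have e5 := hj5 p hp
    have e6 := hj6 p hp
    rw [← e3] at e4 e5 e6
    have hstep := hL.2.2.2.1 (jfun p - 1) (by omega)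
    have hsimp : jfun p - 1 + 1 = jfun p := by omega
    rw [hsimp] at hstep
    obtain ⟨⟨hs1, hs2, hs3⟩, hs4⟩ := hstep
    exact (hXmem p.1 (L (jfun p - 1))).mpr
      ⟨jfun p - 1, by omega, rfl, by omega, by omega, by omega⟩
  have hinj : Set.InjOn g (Ypairs a b a' b' \ YpairsMinus a b a' b' bm') := by
    intro p hp q hq he
    have e3p := hj3 p hp
    have e3q := hj3 q hq
    have h1p := hj1 p hp
    have h2p := hj2 p hp
    have h1q := hj1 q hq
    have h2q := hj2 q hq
    rw [hg, Prod.mk.injEq] at he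
    obtain ⟨he1, he2⟩ := he
    have heq1 : jfun p - 1 = jfun q - 1 := hLinj _ (by omega) _ (by omega) he2
    have heq2 : jfun p = jfun q := by omega
    have : p.2 = q.2 := by rw [← e3p, ← e3q, heq2]
    exact Prod.ext he1 this
  have himg : g '' (Ypairs a b a' b' \ YpairsMinus a b a' b' bm')
      ⊆ Xpairs a b a' b' \ XpairsMinus a b a' b' bm' := by
    rintro _ ⟨p, hp, rfl⟩
    exact hgt p hp
  have hcard2 : (Xpairs a b a' b' \ XpairsMinus a b a' b' bm').ncard
      ≤ (g '' (Ypairs a b a' b' \ YpairsMinus a b a' b' bm')).ncard := by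
    rw [Set.ncard_image_of_injOn hinj]
    exact hcard
  have heq : g '' (Ypairs a b a' b' \ YpairsMinus a b a' b' bm')
      = Xpairs a b a' b' \ XpairsMinus a b a' b' bm' :=
    Set.eq_of_subset_of_ncard_le himg hcard2 (Set.toFinite _)
  have hsurj : ∀ q ∈ Xpairs a b a' b' \ XpairsMinus a b a' b' bm',
      ∃ p ∈ Ypairs a b a' b' \ YpairsMinus a b a' b' bm',
        ∃ j, 1 ≤ j ∧ j < M ∧ p.2 = L j ∧ q = (p.1, L (j - 1)) := by
    intro q hq
    rw [← heq] at hq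
    obtain ⟨p, hp, rfl⟩ := hq
    exact ⟨p, hp, jfun p, hj1 p hp, hj2 p hp, (hj3 p hp).symm, rfl⟩
  exact hmain.mp hsurj
end

section
/- Fix ρ ∈ ℤ and a multisegment m = Σ_{i∈I} Δ_i over ℤ. Set X^ρ_m = {i : b(Δ_i) = ρ+1} and Y^ρ_m = {i : b(Δ_i) = ρ}. A ρ-matching is a one-to-one relation R ⊆ Y^ρ_m × X^ρ_m with Δ_i ≺ Δ_j for all (i,j) ∈ R. If R is a saturated ρ-matching and R' ≥ R in the domination order, then R' is saturated and A(R') = A(R), where A(R) = {i ∈ Y^ρ_m : R(i) undefined}. -/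
/-- Total (lexicographic) order on segments: `[a,b] ≤ [a',b']` iff `b < b'`, or
`b = b'` and `a ≤ a'`. -/
def SegLE (a b a' b' : ℤ) : Prop := b < b' ∨ (b = b' ∧ a ≤ a')

/-- Strict version of `SegLE`. -/
def SegLT (a b a' b' : ℤ) : Prop := b < b' ∨ (b = b' ∧ a < a')

/-- A `ρ`-matching for the multisegment `(a, b)`: a one-to-one relation from
`Y^ρ = {i : b(Δ_i) = ρ}` to `X^ρ = {j : b(Δ_j) = ρ+1}` such that `Δ_i ≺ Δ_j` for each
matched pair. -/
def IsMatching {ι : Type} (a b : ι → ℤ) (ρ : ℤ) (R : Set (ι × ι)) : Prop :=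
  (∀ p ∈ R, a p.1 = ρ ∧ a p.2 = ρ + 1 ∧ SegPrec (a p.1) (b p.1) (a p.2) (b p.2)) ∧
  (∀ p ∈ R, ∀ q ∈ R, p.1 = q.1 → p = q) ∧
  (∀ p ∈ R, ∀ q ∈ R, p.2 = q.2 → p = q)

/-- `A(R)`: the unmatched elements of `Y^ρ`. -/
def unmatchedA {ι : Type} (a : ι → ℤ) (ρ : ℤ) (R : Set (ι × ι)) : Set ι :=
  {i | a i = ρ ∧ ∀ j, (i, j) ∉ R}

/-- `B(R)`: the unmatched elements of `X^ρ`. -/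
def unmatchedB {ι : Type} (a : ι → ℤ) (ρ : ℤ) (R : Set (ι × ι)) : Set ι :=
  {j | a j = ρ + 1 ∧ ∀ i, (i, j) ∉ R}

/-- A saturated `ρ`-matching. -/
def Saturated {ι : Type} (a b : ι → ℤ) (ρ : ℤ) (R : Set (ι × ι)) : Prop :=
  (∀ i ∈ unmatchedA a ρ R, ∀ j ∈ unmatchedB a ρ R,
    ¬ SegPrec (a i) (b i) (a j) (b j)) ∧
  (∀ p ∈ R, ∀ i' ∈ unmatchedA a ρ R,
    SegPrec (a i') (b i') (a p.2) (b p.2) → SegLE (a i') (b i') (a p.1) (b p.1))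

/-- `R₂` dominates `R₁` (one elementary move). -/
def Dominates {ι : Type} (a b : ι → ℤ) (ρ : ℤ) (R₁ R₂ : Set (ι × ι)) : Prop :=
  IsMatching a b ρ R₁ ∧ IsMatching a b ρ R₂ ∧
  (R₁ ⊆ R₂ ∨
    (∃ i j k : ι, R₂ \ R₁ = {(j, k)} ∧ R₁ \ R₂ = {(i, k)} ∧
      SegLT (a i) (b i) (a j) (b j)) ∨
    (∃ i j k : ι, R₂ \ R₁ = {(i, k)} ∧ R₁ \ R₂ = {(i, j)} ∧
      SegLT (a k) (b k) (a j) (b j)))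

lemma segLE_lt_absurd {a1 b1 a2 b2 : ℤ} (h1 : SegLE a2 b2 a1 b1)
    (h2 : SegLT a1 b1 a2 b2) : False := by
  rcases h1 with h | ⟨h, h'⟩ <;> rcases h2 with g | ⟨g, g'⟩ <;> omega

lemma key_step {ι : Type} (a b : ι → ℤ) (hab : ∀ i, a i ≤ b i) (ρ : ℤ)
    (R R' : Set (ι × ι)) (hsat : Saturated a b ρ R)
    (hdom : Dominates a b ρ R R') :
    Saturated a b ρ R' ∧ unmatchedA a ρ R' = unmatchedA a ρ R := by
  obtain ⟨hM, hM', hcase⟩ := hdom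
  rcases hcase with hsub | ⟨i, j, k, h21, h12, hlt⟩ | ⟨i, j, k, h21, h12, hlt⟩
  · -- inclusion case: in fact R' = R
    have hRR : R' = R := by
      apply Set.Subset.antisymm _ hsub
      intro p hp
      by_contra hpn
      have hA : p.1 ∈ unmatchedA a ρ R := by
        refine ⟨(hM'.1 p hp).1, fun y hy => ?_⟩
        have hpy : p = (p.1, y) := hM'.2.1 p hp (p.1, y) (hsub hy) rfl
        exact hpn (by rw [hpy]; exact hy)
      have hB : p.2 ∈ unmatchedB a ρ R := by
        refine ⟨(hM'.1 p hp).2.1, fun x hx => ?_⟩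
        have hpx : p = (x, p.2) := hM'.2.2 p hp (x, p.2) (hsub hx) rfl
        exact hpn (by rw [hpx]; exact hx)
      exact hsat.1 _ hA _ hB (hM'.1 p hp).2.2
    rw [hRR]; exact ⟨hsat, rfl⟩
  · -- case (j,k) replaces (i,k): impossible by saturation
    exfalso
    have hjk : (j, k) ∈ R' \ R := by rw [h21]; exact rfl
    have hik : (i, k) ∈ R \ R' := by rw [h12]; exact rfl
    have hij : i ≠ j := by
      rintro rfl
      rcases hlt with h | ⟨h, h'⟩ <;> omega
    have hjA : j ∈ unmatchedA a ρ R := by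
      refine ⟨(hM'.1 _ hjk.1).1, fun y hy => ?_⟩
      have hy' : (j, y) ∈ R' := by
        by_contra hn
        have h2 : (j, y) ∈ R \ R' := ⟨hy, hn⟩
        rw [h12, Set.mem_singleton_iff, Prod.mk.injEq] at h2
        exact hij h2.1.symm
      have heq : (j, y) = (j, k) := hM'.2.1 (j, y) hy' (j, k) hjk.1 rfl
      rw [Prod.mk.injEq] at heq
      exact hjk.2 (by rw [← heq.2]; exact hy)
    have hLE := hsat.2 (i, k) hik.1 j hjA (hM'.1 _ hjk.1).2.2
    exact segLE_lt_absurd hLE hlt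
  · -- case (i,k) replaces (i,j)
    have hik : (i, k) ∈ R' \ R := by rw [h21]; exact rfl
    have hij : (i, j) ∈ R \ R' := by rw [h12]; exact rfl
    have hjk : j ≠ k := by
      rintro rfl
      rcases hlt with h | ⟨h, h'⟩ <;> omega
    have hai : a i = ρ := (hM.1 _ hij.1).1
    have haj : a j = ρ + 1 := (hM.1 _ hij.1).2.1
    have hak : a k = ρ + 1 := (hM'.1 _ hik.1).2.1
    have hPij : SegPrec (a i) (b i) (a j) (b j) := (hM.1 _ hij.1).2.2
    have hPik : SegPrec (a i) (b i) (a k) (b k) := (hM'.1 _ hik.1).2.2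
    have hAeq : unmatchedA a ρ R' = unmatchedA a ρ R := by
      ext x
      constructor
      · rintro ⟨hx, hx2⟩
        refine ⟨hx, fun y hy => ?_⟩
        by_cases hxy : (x, y) = (i, j)
        · rw [Prod.mk.injEq] at hxy
          obtain ⟨rfl, rfl⟩ := hxy
          exact hx2 k hik.1
        · have hy' : (x, y) ∈ R' := by
            by_contra hn
            have h2 : (x, y) ∈ R \ R' := ⟨hy, hn⟩
            rw [h12, Set.mem_singleton_iff] at h2
            exact hxy h2
          exact hx2 y hy'
      · rintro ⟨hx, hx2⟩
        refine ⟨hx, fun y hy => ?_⟩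
        by_cases hxy : (x, y) = (i, k)
        · rw [Prod.mk.injEq] at hxy
          obtain ⟨rfl, rfl⟩ := hxy
          exact hx2 j hij.1
        · have hy' : (x, y) ∈ R := by
            by_contra hn
            have h2 : (x, y) ∈ R' \ R := ⟨hy, hn⟩
            rw [h21, Set.mem_singleton_iff] at h2
            exact hxy h2
          exact hx2 y hy'
    have hkB : k ∈ unmatchedB a ρ R := by
      refine ⟨hak, fun x hx => ?_⟩
      by_cases hxe : (x, k) = (i, j)
      · rw [Prod.mk.injEq] at hxe
        exact hjk hxe.2.symm
      · have hx' : (x, k) ∈ R' := by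
          by_contra hn
          have h2 : (x, k) ∈ R \ R' := ⟨hx, hn⟩
          rw [h12, Set.mem_singleton_iff] at h2
          exact hxe h2
        have heq : (x, k) = (i, k) := hM'.2.2 (x, k) hx' (i, k) hik.1 rfl
        rw [Prod.mk.injEq] at heq
        exact hik.2 (by rw [← heq.1]; exact hx)
    have hcond1 : ∀ i' ∈ unmatchedA a ρ R', ∀ j' ∈ unmatchedB a ρ R',
        ¬ SegPrec (a i') (b i') (a j') (b j') := by
      intro i' hi' j' hj' hP
      rw [hAeq] at hi'
      by_cases hjj : j' = j
      · subst hjj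
        have hle : SegLE (a i') (b i') (a i) (b i) := hsat.2 (i, j') hij.1 i' hi' hP
        have hnp := hsat.1 i' hi' k hkB
        have h1 : a i' = ρ := hi'.1
        have h0 := hab i'
        have h2 : b i' ≤ b i := by rcases hle with h | ⟨h, h'⟩ <;> omega
        have h3 : b i < b k := hPik.2.2
        exact hnp ⟨by omega, by omega, by omega⟩
      · have hj'B : j' ∈ unmatchedB a ρ R := by
          refine ⟨hj'.1, fun x hx => ?_⟩
          by_cases hxe : (x, j') = (i, j)
          · rw [Prod.mk.injEq] at hxe
            exact hjj hxe.2
          · have hx' : (x, j') ∈ R' := by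
              by_contra hn
              have h2 : (x, j') ∈ R \ R' := ⟨hx, hn⟩
              rw [h12, Set.mem_singleton_iff] at h2
              exact hxe h2
            exact hj'.2 x hx'
        exact hsat.1 i' hi' j' hj'B hP
    have hcond2 : ∀ p ∈ R', ∀ i' ∈ unmatchedA a ρ R',
        SegPrec (a i') (b i') (a p.2) (b p.2) →
          SegLE (a i') (b i') (a p.1) (b p.1) := by
      intro p hp i' hi' hP
      rw [hAeq] at hi'
      by_cases hpR : p ∈ R
      · exact hsat.2 p hpR i' hi' hP
      · have hpe : p = (i, k) := by
          have h2 : p ∈ R' \ R := ⟨hp, hpR⟩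
          rwa [h21, Set.mem_singleton_iff] at h2
        subst hpe
        exact absurd hP (hsat.1 i' hi' k hkB)
    exact ⟨⟨hcond1, hcond2⟩, hAeq⟩

/-- If `R` is a saturated `ρ`-matching and `R' ≥ R` in the domination order, then `R'`
is saturated and `A(R') = A(R)`. -/
theorem stmt12 {ι : Type} [Fintype ι] (a b : ι → ℤ) (hab : ∀ i, a i ≤ b i) (ρ : ℤ)
    (R R' : Set (ι × ι))
    (hR : IsMatching a b ρ R) (hsat : Saturated a b ρ R)
    (hle : Relation.ReflTransGen (Dominates a b ρ) R R') :
    Saturated a b ρ R' ∧ unmatchedA a ρ R' = unmatchedA a ρ R := by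
  induction hle with
  | refl => exact ⟨hsat, rfl⟩
  | tail h1 h2 ih =>
      obtain ⟨hs, hA⟩ := ih
      obtain ⟨hs', hA'⟩ := key_step a b hab ρ _ _ hs h2
      exact ⟨hs', hA'.trans hA⟩
end

section
/- Fix ρ ∈ ℤ and a ρ-matching R for a multisegment m = Σ_{i∈I} Δ_i over ℤ. If R₂ dominates R₁ then Σ_{i ∈ A(R₂)} Δ_i ≤ Σ_{i ∈ A(R₁)} Δ_i in the sense that for every segment Δ, #{i ∈ A(R₂) : Δ_i ≥ Δ} ≤ #{i ∈ A(R₁) : Δ_i ≥ Δ}, where ≥ is the lexicographic order on segments by (e, b). -/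
/-!
Moves (a) and (c) only shrink `A(R)`. In move (b) the element `i` may become unmatched, but then
`j`, unmatched in `R₁`, becomes matched, and `Δ_i < Δ_j`; since `{Δ' | Δ' ≥ Δ}` is an upper set,
`j` is counted on the right whenever `i` is counted on the left.
-/

lemma Set.ncard_le_ncard_of_diff_singleton_subset {α : Type*} {s t : Set α} {i j : α}
    (hs : s \ {i} ⊆ t) (hi : i ∈ s → j ∈ t \ s) (ht : t.Finite) : s.ncard ≤ t.ncard := by
  by_cases hmem : i ∈ s
  · obtain ⟨hjt, hjs⟩ := hi hmem
    have hsub : s \ {i} ⊆ t \ {j} := fun x hx =>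
      ⟨hs hx, fun hxj => hjs (Set.mem_singleton_iff.mp hxj ▸ hx.1)⟩
    have hsfin : s.Finite := (ht.insert i).subset (Set.sdiff_singleton_subset_iff.mp hs)
    calc s.ncard = (s \ {i}).ncard + 1 := (Set.ncard_sdiff_singleton_add_one hmem hsfin).symm
      _ ≤ (t \ {j}).ncard + 1 := Nat.add_le_add_right (Set.ncard_le_ncard hsub ht.sdiff) 1
      _ = t.ncard := Set.ncard_sdiff_singleton_add_one hjt ht
  · exact Set.ncard_le_ncard (fun x hx => hs ⟨hx, fun hxi => hmem (hxi ▸ hx)⟩) ht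

lemma SegLE.trans_segLT {α β x y x' y' : ℤ} (h₁ : SegLE α β x y) (h₂ : SegLT x y x' y') :
    SegLE α β x' y' := by
  unfold SegLE SegLT at *; omega

lemma segLT_irrefl (x y : ℤ) : ¬ SegLT x y x y := by
  unfold SegLT; omega

section Unmatched

variable {ι : Type} {a b : ι → ℤ} {ρ : ℤ} {R₁ R₂ : Set (ι × ι)}

lemma mem_unmatchedA_of_forall_not_mem_sdiff {x : ι} (hx : x ∈ unmatchedA a ρ R₂)
    (h : ∀ y, (x, y) ∉ R₁ \ R₂) : x ∈ unmatchedA a ρ R₁ :=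
  ⟨hx.1, fun y hy => h y ⟨hy, hx.2 y⟩⟩

lemma unmatchedA_anti (h : R₁ ⊆ R₂) : unmatchedA a ρ R₂ ⊆ unmatchedA a ρ R₁ :=
  fun _ hx => mem_unmatchedA_of_forall_not_mem_sdiff hx fun _ hy => hy.2 (h hy.1)

lemma unmatchedA_subset_of_exchange_snd {i j k : ι} (h₂₁ : R₂ \ R₁ = {(i, k)})
    (h₁₂ : R₁ \ R₂ = {(i, j)}) : unmatchedA a ρ R₂ ⊆ unmatchedA a ρ R₁ := by
  have hik : (i, k) ∈ R₂ := (h₂₁.symm ▸ rfl : (i, k) ∈ R₂ \ R₁).1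
  refine fun x hx => mem_unmatchedA_of_forall_not_mem_sdiff hx fun y hy => ?_
  rw [h₁₂, Set.mem_singleton_iff, Prod.mk.injEq] at hy
  exact hx.2 k (hy.1 ▸ hik)

lemma unmatchedA_diff_subset_of_exchange_fst {i k : ι} (h₁₂ : R₁ \ R₂ = {(i, k)}) :
    unmatchedA a ρ R₂ \ {i} ⊆ unmatchedA a ρ R₁ := by
  refine fun x hx => mem_unmatchedA_of_forall_not_mem_sdiff hx.1 fun y hy => hx.2 ?_
  rw [h₁₂, Set.mem_singleton_iff, Prod.mk.injEq] at hy
  exact hy.1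

lemma mem_unmatchedA_of_exchange_fst {i j k : ι} (hR₂ : IsMatching a b ρ R₂)
    (h₂₁ : R₂ \ R₁ = {(j, k)}) (h₁₂ : R₁ \ R₂ = {(i, k)}) (hij : i ≠ j) :
    j ∈ unmatchedA a ρ R₁ := by
  obtain ⟨hjk₂, hjk₁⟩ : (j, k) ∈ R₂ \ R₁ := h₂₁.symm ▸ rfl
  refine ⟨(hR₂.1 _ hjk₂).1, fun y hy => ?_⟩
  by_cases hy₂ : (j, y) ∈ R₂
  · -- `R₂` matches `j` only once, so `y = k`
    obtain rfl : y = k := congrArg Prod.snd (hR₂.2.1 _ hy₂ _ hjk₂ rfl)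
    exact hjk₁ hy
  · have : (j, y) ∈ R₁ \ R₂ := ⟨hy, hy₂⟩
    rw [h₁₂, Set.mem_singleton_iff, Prod.mk.injEq] at this
    exact hij this.1.symm

end Unmatched

theorem stmt13_general {ι : Type} [Fintype ι] (a b : ι → ℤ) (ρ : ℤ)
    (R₁ R₂ : Set (ι × ι)) (hdom : Dominates a b ρ R₁ R₂) :
    ∀ α β : ℤ, α ≤ β →
      ({i | i ∈ unmatchedA a ρ R₂ ∧ SegLE α β (a i) (b i)}).ncard ≤
        ({i | i ∈ unmatchedA a ρ R₁ ∧ SegLE α β (a i) (b i)}).ncard := by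
  intro α β _
  have of_subset (h : unmatchedA a ρ R₂ ⊆ unmatchedA a ρ R₁) :
      ({i | i ∈ unmatchedA a ρ R₂ ∧ SegLE α β (a i) (b i)}).ncard ≤
        ({i | i ∈ unmatchedA a ρ R₁ ∧ SegLE α β (a i) (b i)}).ncard :=
    Set.ncard_le_ncard (fun _ hx => ⟨h hx.1, hx.2⟩) (Set.toFinite _)
  obtain ⟨-, hR₂, hsub | ⟨i, j, k, h₂₁, h₁₂, hij⟩ | ⟨i, j, k, h₂₁, h₁₂, -⟩⟩ := hdom
  · exact of_subset (unmatchedA_anti hsub)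
  · have hjk₂ : (j, k) ∈ R₂ := (h₂₁.symm ▸ rfl : (j, k) ∈ R₂ \ R₁).1
    refine Set.ncard_le_ncard_of_diff_singleton_subset (i := i) (j := j)
      (fun x hx => ⟨unmatchedA_diff_subset_of_exchange_fst h₁₂ ⟨hx.1.1, hx.2⟩, hx.1.2⟩)
      (fun hi => ⟨⟨?_, hi.2.trans_segLT hij⟩, fun hj => hj.1.2 k hjk₂⟩) (Set.toFinite _)
    exact mem_unmatchedA_of_exchange_fst hR₂ h₂₁ h₁₂ fun h => segLT_irrefl _ _ (h ▸ hij)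
  · exact of_subset (unmatchedA_subset_of_exchange_snd h₂₁ h₁₂)

/-- If `R₂` dominates `R₁`, then for every segment `Δ = [α,β]`,
`#{i ∈ A(R₂) : Δ_i ≥ Δ} ≤ #{i ∈ A(R₁) : Δ_i ≥ Δ}`. -/
theorem stmt13 {ι : Type} [Fintype ι] (a b : ι → ℤ) (hab : ∀ i, a i ≤ b i) (ρ : ℤ)
    (R₁ R₂ : Set (ι × ι)) (hdom : Dominates a b ρ R₁ R₂) :
    ∀ α β : ℤ, α ≤ β →
      ({i | i ∈ unmatchedA a ρ R₂ ∧ SegLE α β (a i) (b i)}).ncard ≤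
        ({i | i ∈ unmatchedA a ρ R₁ ∧ SegLE α β (a i) (b i)}).ncard :=
  stmt13_general a b ρ R₁ R₂ hdom
end

section
/- Let m = Σ_{i∈I} Δ_i and m' = Σ_{i'∈I'} Δ_{i'} be multisegments over ℤ, fix ρ ∈ ℤ, and suppose m' admits a maximal ρ-matching R' with A(R') = ∅ (i.e., every index of Y^ρ_{m'} is matched). Let A ⊆ Y^ρ_m be any subset. Define X̃ = X_{m,m'} ∩ (A × X^ρ_{m'}) and Ỹ = Y_{m,m'} ∩ (A × Y^ρ_{m'}), where X_{m,m'} = {(i,i') : Δ_i ≺ Δ_{i'}} and Y_{m,m'} = {(i,i') : Δ_i ≺ σΔ_{i'}}. Then the map f : Ỹ → X̃ given by (i, j') ↦ (i, R'(j')) is well-defined and injective; in particular #X̃ ≥ #Ỹ. -/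
/-- Let `m`, `m'` be multisegments, `ρ ∈ ℤ`, and let `R'` be a maximal `ρ`-matching for
`m'` with `A(R') = ∅`.  For any `A ⊆ Y^ρ_m`, setting
`X̃ = X_{m,m'} ∩ (A × X^ρ_{m'})` and `Ỹ = Y_{m,m'} ∩ (A × Y^ρ_{m'})`, the map
`f : Ỹ → X̃`, `(i, j') ↦ (i, R'(j'))`, is well-defined and injective; in particular
`#X̃ ≥ #Ỹ`. -/
theorem stmt15 {ι ι' : Type} [Fintype ι] [Fintype ι']
    (a b : ι → ℤ) (hab : ∀ i, a i ≤ b i)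
    (a' b' : ι' → ℤ) (hab' : ∀ i', a' i' ≤ b' i')
    (ρ : ℤ) (R' : Set (ι' × ι')) (hR' : IsMatching a' b' ρ R')
    -- `R'` is maximal in the domination order
    (hmax : ∀ R'' : Set (ι' × ι'), Relation.ReflTransGen (Dominates a' b' ρ) R' R'' →
      Relation.ReflTransGen (Dominates a' b' ρ) R'' R')
    -- `A(R') = ∅`: every element of `Y^ρ_{m'}` is matched
    (hA : ∀ j', a' j' = ρ → ∃ k, (j', k) ∈ R')
    (A : Set ι) (hAY : ∀ i ∈ A, a i = ρ) :
    -- well-definedness of `f`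
    (∀ i : ι, ∀ j' : ι', i ∈ A → a' j' = ρ →
      SegPrec (a i) (b i) (a' j' + 1) (b' j' + 1) →
      ∃ k, (j', k) ∈ R' ∧ a' k = ρ + 1 ∧ SegPrec (a i) (b i) (a' k) (b' k)) ∧
    -- injectivity of `f`
    (∀ p q : ι × ι', p.1 ∈ A → q.1 ∈ A → a' p.2 = ρ → a' q.2 = ρ →
      SegPrec (a p.1) (b p.1) (a' p.2 + 1) (b' p.2 + 1) →
      SegPrec (a q.1) (b q.1) (a' q.2 + 1) (b' q.2 + 1) →
      ∀ k k', (p.2, k) ∈ R' → (q.2, k') ∈ R' → (p.1, k) = (q.1, k') → p = q) ∧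
    -- cardinality consequence
    ({p : ι × ι' | p.1 ∈ A ∧ a' p.2 = ρ ∧
        SegPrec (a p.1) (b p.1) (a' p.2 + 1) (b' p.2 + 1)}).ncard ≤
      ({p : ι × ι' | p.1 ∈ A ∧ a' p.2 = ρ + 1 ∧
        SegPrec (a p.1) (b p.1) (a' p.2) (b' p.2)}).ncard := by
  classical
  -- well-definedness
  have wd : ∀ i : ι, ∀ j' : ι', i ∈ A → a' j' = ρ →
      SegPrec (a i) (b i) (a' j' + 1) (b' j' + 1) →
      ∃ k, (j', k) ∈ R' ∧ a' k = ρ + 1 ∧ SegPrec (a i) (b i) (a' k) (b' k) := by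
    intro i j' hiA hj' hprec
    obtain ⟨k, hk⟩ := hA j' hj'
    obtain ⟨hY, hX, hkprec⟩ := hR'.1 _ hk
    refine ⟨k, hk, hX, ?_, ?_, ?_⟩
    · rw [hAY i hiA, hX]; omega
    · have := hab i; rw [hAY i hiA] at this; rw [hX]; omega
    · -- b i ≤ b' j' < b' k
      have h1 : b i ≤ b' j' := by have := hprec.2.2; omega
      have h2 : b' j' < b' k := hkprec.2.2
      omega
  have inj : ∀ p q : ι × ι', p.1 ∈ A → q.1 ∈ A → a' p.2 = ρ → a' q.2 = ρ →
      SegPrec (a p.1) (b p.1) (a' p.2 + 1) (b' p.2 + 1) →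
      SegPrec (a q.1) (b q.1) (a' q.2 + 1) (b' q.2 + 1) →
      ∀ k k', (p.2, k) ∈ R' → (q.2, k') ∈ R' → (p.1, k) = (q.1, k') → p = q := by
    intro p q _ _ _ _ _ _ k k' hpk hqk heq
    injection heq with h1 h2
    subst h2
    have h4 := hR'.2.2 _ hpk _ hqk rfl
    injection h4 with h3 _
    exact Prod.ext h1 h3
  refine ⟨wd, inj, ?_⟩
  set Yt := {p : ι × ι' | p.1 ∈ A ∧ a' p.2 = ρ ∧
      SegPrec (a p.1) (b p.1) (a' p.2 + 1) (b' p.2 + 1)}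
  set Xt := {p : ι × ι' | p.1 ∈ A ∧ a' p.2 = ρ + 1 ∧
      SegPrec (a p.1) (b p.1) (a' p.2) (b' p.2)}
  have g : ∀ p : ι × ι', ∃ k, p ∈ Yt → (p.2, k) ∈ R' ∧ a' k = ρ + 1 ∧
      SegPrec (a p.1) (b p.1) (a' k) (b' k) := by
    intro p
    by_cases hp : p ∈ Yt
    · obtain ⟨k, hk⟩ := wd p.1 p.2 hp.1 hp.2.1 hp.2.2
      exact ⟨k, fun _ => hk⟩
    · exact ⟨p.2, fun h => absurd h hp⟩
  choose f hf using g
  have hf1 : ∀ p ∈ Yt, (p.2, f p) ∈ R' := fun p hp => (hf p hp).1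
  have hmap : ∀ p ∈ Yt, (p.1, f p) ∈ Xt := fun p hp => ⟨hp.1, (hf p hp).2.1, (hf p hp).2.2⟩
  have hinj : Set.InjOn (fun p => (p.1, f p)) Yt := by
    intro p hp q hq heq
    exact inj p q hp.1 hq.1 hp.2.1 hq.2.1 hp.2.2 hq.2.2 (f p) (f q)
      (hf1 p hp) (hf1 q hq) heq
  exact Set.ncard_le_ncard_of_injOn _ hmap hinj (Set.toFinite _)
end
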